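/- arXiv:1603.03887 — 5 statements merged into one kernel-verified Lean document; each statement's English description precedes it below -/
import Mathlib

section
/- Let s, t ∈ {0,1}^{-ℕ} be admissible left-infinite sequences with τ_L(s),τ_R(s),τ_L(t),τ_R(t) < ∞ such that s_i = t_i for all i < 0 except for i = −τ_R(s) = −τ_R(t) (or, alternatively, except for i = −τ_L(s) = −τ_L(t)). Then the basic arcs A(s) and A(t) have a common boundary point. -/
/-- `T : ℝ → ℝ` is a unimodal map on `[0,1]` with critical point `c`. -/
def IsUnimodal (T : ℝ → ℝ) (c : ℝ) : Prop :=
  ContinuousOn T (Set.Icc 0 1) ∧ Set.MapsTo T (Set.Icc 0 1) (Set.Icc 0 1) ∧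
    T 0 = 0 ∧ 0 < c ∧ c < 1 ∧
    StrictMonoOn T (Set.Icc 0 c) ∧ StrictAntiOn T (Set.Icc c 1)

-- Symbols `0, *, 1` are encoded as `(0 : Fin 3), (1 : Fin 3), (2 : Fin 3)`
-- respectively; this realizes the order `0 < * < 1`.
open Classical in
/-- The raw (unmodified) itinerary of `x`: the `n`-th symbol is `0` if `Tⁿ(x) < c`,
`*` if `Tⁿ(x) = c` and `1` if `Tⁿ(x) > c`. -/
noncomputable def rawItin (T : ℝ → ℝ) (c : ℝ) (x : ℝ) : ℕ → Fin 3 := fun n =>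
  if T^[n] x < c then 0 else if T^[n] x = c then 1 else 2

/-- The number of `1`s among the first `k` symbols of `s`. -/
def onesCount (s : ℕ → Fin 3) (k : ℕ) : ℕ :=
  ((Finset.range k).filter fun i => s i = 2).card

/-- The (strict) parity-lexicographical ordering on `{0,*,1}^ℕ`. -/
def PlexLt (s t : ℕ → Fin 3) : Prop :=
  ∃ k : ℕ, (∀ i < k, s i = t i) ∧ s k ≠ t k ∧
    ((s k < t k ∧ Even (onesCount s k)) ∨ (t k < s k ∧ Odd (onesCount s k)))

/-- The parity-lexicographical ordering `⪯`. -/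
def PlexLe (s t : ℕ → Fin 3) : Prop := PlexLt s t ∨ s = t

open Classical in
/-- The (modified) kneading sequence `ν = c₁c₂… = I(T(c))`: if the critical point is
periodic, so that the raw itinerary of `T(c)` contains `*` (first at index `n-1`, whence it
is `(c₁…c_{n-1}*)^∞`), then `ν` is the parity-lexicographically smaller of
`(c₁…c_{n-1}0)^∞` and `(c₁…c_{n-1}1)^∞`. -/
noncomputable def kneading (T : ℝ → ℝ) (c : ℝ) : ℕ → Fin 3 :=
  if h : ∃ i, rawItin T c (T c) i = 1 then
    let n := Nat.find h + 1
    let w : Fin 3 → ℕ → Fin 3 := fun b j =>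
      if j % n = n - 1 then b else rawItin T c (T c) (j % n)
    if PlexLe (w 0) (w 2) then w 0 else w 2
  else rawItin T c (T c)

open Classical in
/-- The modified itinerary of `x`: it agrees with the raw itinerary up to the first
occurrence of `*` (if any), and after that first `*` it continues with the modified
kneading sequence `ν`. -/
noncomputable def itin (T : ℝ → ℝ) (c : ℝ) (x : ℝ) : ℕ → Fin 3 :=
  if h : ∃ i, T^[i] x = c then
    fun n =>
      if n < Nat.find h then rawItin T c x n
      else if n = Nat.find h then 1
      else kneading T c (n - Nat.find h - 1)
  else rawItin T c x


/-- The inverse limit `X = lim←([0,1], T)`, modelled as sequences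
`x : ℕ → ℝ` where `x n` represents the coordinate `x_{-n}`. -/
def invLimitSet (T : ℝ → ℝ) : Set (ℕ → ℝ) :=
  {x | (∀ n, x n ∈ Set.Icc (0 : ℝ) 1) ∧ ∀ n, T (x (n + 1)) = x n}

/-- Encoding of the two-element alphabet `{0,1}` into `{0,*,1}`:
`false ↦ 0` and `true ↦ 1` (i.e. `(2 : Fin 3)`). -/
def b2f (b : Bool) : Fin 3 := if b then 2 else 0

/-- A left-infinite sequence `s = …s_{-2}s_{-1} ∈ {0,1}^{-ℕ}` is modelled as
`s : ℕ → Bool` with `s i` representing `s_{-(i+1)}`. It is admissible if every finite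
subword `s_{-(m+1)} … s_{-1}` of it occurs in the (modified) itinerary of some point
of `[0,1]`. -/
def AdmissibleLeft (T : ℝ → ℝ) (c : ℝ) (s : ℕ → Bool) : Prop :=
  ∀ m : ℕ, ∃ x ∈ Set.Icc (0 : ℝ) 1, ∃ p : ℕ,
    ∀ j ≤ m, itin T c x (p + j) = b2f (s (m - j))

/-- The word condition `s_{-(n-1)} … s_{-1} = c₁ … c_{n-1}`, where `ν = c₁c₂…` is the
(modified) kneading sequence, i.e. `c_j = kneading T c (j-1)`; for `n = 1` it is vacuous. -/
noncomputable def PrefixMatch (T : ℝ → ℝ) (c : ℝ) (s : ℕ → Bool) (n : ℕ) : Prop :=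
  ∀ i, i < n - 1 → b2f (s i) = kneading T c (n - 2 - i)

/-- `#_1(c₁…c_k)`: the number of `1`s among the first `k` entries of the kneading sequence. -/
noncomputable def kneadOnes (T : ℝ → ℝ) (c : ℝ) (k : ℕ) : ℕ :=
  ((Finset.range k).filter fun j => kneading T c j = 2).card

/-- The set `{n > 1 : s_{-(n-1)}…s_{-1} = c₁…c_{n-1}, #_1(c₁…c_{n-1}) odd}`;
`τ_L(s)` is its supremum. -/
def tauLSet (T : ℝ → ℝ) (c : ℝ) (s : ℕ → Bool) : Set ℕ :=
  {n | 1 < n ∧ PrefixMatch T c s n ∧ Odd (kneadOnes T c (n - 1))}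

/-- The set `{n ≥ 1 : s_{-(n-1)}…s_{-1} = c₁…c_{n-1}, #_1(c₁…c_{n-1}) even}`;
`τ_R(s)` is its supremum. -/
def tauRSet (T : ℝ → ℝ) (c : ℝ) (s : ℕ → Bool) : Set ℕ :=
  {n | 1 ≤ n ∧ PrefixMatch T c s n ∧ Even (kneadOnes T c (n - 1))}

/-- `x_i` matches the symbol `s_i ∈ {0,1}` : either `x_i` lies strictly on the side
of `c` prescribed by `s_i`, or `x_i = c` (in which case, after the identifications of
itineraries containing `*`, the coordinate matches both symbols). -/
def SymMatch (c y : ℝ) (b : Bool) : Prop :=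
  y = c ∨ (y < c ∧ b = false) ∨ (c < y ∧ b = true)

/-- The basic arc `A(s) = {x ∈ X : ν_i(x) = s_i for all i < 0}` of an admissible
left-infinite sequence `s`. -/
def basicArc (T : ℝ → ℝ) (c : ℝ) (s : ℕ → Bool) : Set (ℕ → ℝ) :=
  {x | x ∈ invLimitSet T ∧ ∀ i : ℕ, SymMatch c (x (i + 1)) (s i)}

/-- The projection `π₀` of the inverse limit to the `0`-th coordinate. -/
def proj0 (x : ℕ → ℝ) : ℝ := x 0

/-- `x` is a boundary point (endpoint) of the (possibly degenerate) basic arc `A`: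
it belongs to `A` and its `π₀`-projection is extremal in `π₀(A)` (recall that `π₀` is
injective on every basic arc, so these are exactly the endpoints of the arc). -/
noncomputable def IsBoundaryPointOf (x : ℕ → ℝ) (A : Set (ℕ → ℝ)) : Prop :=
  x ∈ A ∧ (proj0 x = sInf (proj0 '' A) ∨ proj0 x = sSup (proj0 '' A))

section Stmt6Aux

open Set

variable {T : ℝ → ℝ} {c : ℝ}

/-- weak (non-strict) side matching -/
def WMatch (c y : ℝ) (b : Bool) : Prop := (b = false → y ≤ c) ∧ (b = true → c ≤ y)

lemma WMatch.symMatch {y : ℝ} {b : Bool} (h : WMatch c y b) : SymMatch c y b := by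
  cases b with
  | false =>
    rcases lt_or_eq_of_le (h.1 rfl) with h' | h'
    · exact Or.inr (Or.inl ⟨h', rfl⟩)
    · exact Or.inl h'
  | true =>
    rcases eq_or_lt_of_le (h.2 rfl) with h' | h'
    · exact Or.inl h'.symm
    · exact Or.inr (Or.inr ⟨h', rfl⟩)

lemma SymMatch.wMatch {y : ℝ} {b : Bool} (h : SymMatch c y b) : WMatch c y b := by
  rcases h with h | ⟨h, hb⟩ | ⟨h, hb⟩
  · subst h; exact ⟨fun _ => le_rfl, fun _ => le_rfl⟩
  · subst hb; exact ⟨fun _ => h.le, fun hb => by simp at hb⟩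
  · subst hb; exact ⟨fun hb => by simp at hb, fun _ => h.le⟩

lemma wmatch_c (b : Bool) : WMatch c c b := ⟨fun _ => le_rfl, fun _ => le_rfl⟩

lemma IsUnimodal.c_mem (hT : IsUnimodal T c) : c ∈ Icc (0:ℝ) 1 :=
  ⟨hT.2.2.2.1.le, hT.2.2.2.2.1.le⟩

lemma IsUnimodal.iter_mem (hT : IsUnimodal T c) {x : ℝ} (hx : x ∈ Icc (0:ℝ) 1) (n : ℕ) :
    T^[n] x ∈ Icc (0:ℝ) 1 := by
  induction n with
  | zero => exact hx
  | succ n ih => rw [Function.iterate_succ_apply']; exact hT.2.1 ih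

lemma IsUnimodal.le_Tc (hT : IsUnimodal T c) {x : ℝ} (hx : x ∈ Icc (0:ℝ) 1) : T x ≤ T c := by
  rcases le_total x c with h | h
  · exact hT.2.2.2.2.2.1.monotoneOn ⟨hx.1, h⟩ ⟨hT.2.2.2.1.le, le_rfl⟩ h
  · exact hT.2.2.2.2.2.2.antitoneOn ⟨le_rfl, hT.2.2.2.2.1.le⟩ ⟨h, hx.2⟩ h

lemma IsUnimodal.mono_le (hT : IsUnimodal T c) {a b : ℝ} (ha : a ∈ Icc (0:ℝ) 1)
    (hb : b ∈ Icc (0:ℝ) 1) (ha' : a ≤ c) (hb' : b ≤ c) (hab : a ≤ b) : T a ≤ T b :=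
  hT.2.2.2.2.2.1.monotoneOn ⟨ha.1, ha'⟩ ⟨hb.1, hb'⟩ hab

lemma IsUnimodal.anti_le (hT : IsUnimodal T c) {a b : ℝ} (ha : a ∈ Icc (0:ℝ) 1)
    (hb : b ∈ Icc (0:ℝ) 1) (ha' : c ≤ a) (hb' : c ≤ b) (hab : a ≤ b) : T b ≤ T a :=
  hT.2.2.2.2.2.2.antitoneOn ⟨ha', ha.2⟩ ⟨hb', hb.2⟩ hab

lemma rawItin_eq_one_iff {x : ℝ} {n : ℕ} : rawItin T c x n = 1 ↔ T^[n] x = c := by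
  unfold rawItin
  split_ifs with h1 h2
  · exact iff_of_false (by decide) (ne_of_lt h1)
  · exact iff_of_true rfl h2
  · exact iff_of_false (by decide) h2

lemma rawItin_side {x : ℝ} {n : ℕ} :
    (rawItin T c x n = 0 → T^[n] x ≤ c) ∧ (rawItin T c x n = 2 → c ≤ T^[n] x) := by
  unfold rawItin
  split_ifs with h1 h2
  · exact ⟨fun _ => h1.le, fun h => absurd h (by decide)⟩
  · exact ⟨fun h => absurd h (by decide), fun h => absurd h (by decide)⟩
  · exact ⟨fun h => absurd h (by decide), fun _ => not_lt.mp h1⟩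

lemma fin3_cases (a : Fin 3) : a = 0 ∨ a = 1 ∨ a = 2 := by
  fin_cases a <;> simp

lemma kneading_side (hT : IsUnimodal T c) (j : ℕ) :
    kneading T c j ≠ 1 ∧ (kneading T c j = 0 → T^[j] (T c) ≤ c) ∧
      (kneading T c j = 2 → c ≤ T^[j] (T c)) := by
  by_cases h : ∃ i, rawItin T c (T c) i = 1
  · have hfc : T^[Nat.find h] (T c) = c := rawItin_eq_one_iff.mp (Nat.find_spec h)
    have hblock : T^[Nat.find h + 1] (T c) = T c := by
      rw [Nat.add_comm, Function.iterate_add_apply, hfc]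
      simp
    have hper : ∀ i : ℕ, T^[i] (T c) = T^[i % (Nat.find h + 1)] (T c) := by
      have hq : ∀ q, T^[(Nat.find h + 1) * q] (T c) = T c := by
        intro q
        induction q with
        | zero => simp
        | succ q ih => rw [Nat.mul_succ, Function.iterate_add_apply, hblock, ih]
      intro i
      conv_lhs => rw [← Nat.mod_add_div i (Nat.find h + 1)]
      rw [Function.iterate_add_apply, hq]
    have hmod : j % (Nat.find h + 1) < Nat.find h + 1 := Nat.mod_lt _ (by omega)
    unfold kneading
    rw [dif_pos h]
    split_ifs with hple <;> beta_reduce <;> split_ifs with hcase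
    · have heq : T^[j] (T c) = c := by
        rw [hper j, hcase]; simpa using hfc
      exact ⟨by decide, fun _ => heq.le, fun _ => heq.ge⟩
    · have hne : rawItin T c (T c) (j % (Nat.find h + 1)) ≠ 1 := by
        intro h1
        exact Nat.find_min h (by omega) h1
      exact ⟨hne, fun h0 => (hper j) ▸ rawItin_side.1 h0, fun h2 => (hper j) ▸ rawItin_side.2 h2⟩
    · have heq : T^[j] (T c) = c := by
        rw [hper j, hcase]; simpa using hfc
      exact ⟨by decide, fun h0 => absurd h0 (by decide), fun _ => heq.ge⟩
    · have hne : rawItin T c (T c) (j % (Nat.find h + 1)) ≠ 1 := by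
        intro h1
        exact Nat.find_min h (by omega) h1
      exact ⟨hne, fun h0 => (hper j) ▸ rawItin_side.1 h0, fun h2 => (hper j) ▸ rawItin_side.2 h2⟩
  · have hk : kneading T c j = rawItin T c (T c) j := by
      unfold kneading; rw [dif_neg h]
    rw [hk]
    exact ⟨fun h1 => h ⟨j, h1⟩, rawItin_side.1, rawItin_side.2⟩

lemma itin_side (hT : IsUnimodal T c) {x : ℝ} (k : ℕ) :
    (itin T c x k = 0 → T^[k] x ≤ c) ∧ (itin T c x k = 2 → c ≤ T^[k] x) := by
  unfold itin
  by_cases h : ∃ i, T^[i] x = c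
  · rw [dif_pos h]
    rcases lt_trichotomy k (Nat.find h) with hk | hk | hk
    · rw [if_pos hk]
      exact ⟨rawItin_side.1, rawItin_side.2⟩
    · rw [if_neg (by omega), if_pos hk]
      exact ⟨fun h' => absurd h' (by decide), fun h' => absurd h' (by decide)⟩
    · rw [if_neg (by omega), if_neg (by omega)]
      have hxe : T^[k] x = T^[k - Nat.find h - 1] (T c) := by
        have h1 : T^[Nat.find h] x = c := Nat.find_spec h
        have h2 : k = ((k - Nat.find h - 1) + 1) + Nat.find h := by omega
        rw [h2, Function.iterate_add_apply, h1, Function.iterate_add_apply]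
        simp
      rw [hxe]
      exact ⟨(kneading_side hT _).2.1, (kneading_side hT _).2.2⟩
  · rw [dif_neg h]
    exact ⟨rawItin_side.1, rawItin_side.2⟩

lemma wmatch_of_itin (hT : IsUnimodal T c) {x : ℝ} {k : ℕ} {b : Bool}
    (h : itin T c x k = b2f b) : WMatch c (T^[k] x) b := by
  cases b with
  | false =>
    exact ⟨fun _ => (itin_side hT k).1 (by simpa [b2f] using h), fun hb => by simp at hb⟩
  | true =>
    exact ⟨fun hb => by simp at hb, fun _ => (itin_side hT k).2 (by simpa [b2f] using h)⟩

lemma wmatch_of_kneading (hT : IsUnimodal T c) {b : Bool} {j : ℕ}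
    (h : b2f b = kneading T c j) : WMatch c (T^[j] (T c)) b := by
  cases b with
  | false =>
    refine ⟨fun _ => (kneading_side hT j).2.1 ?_, fun hb => by simp at hb⟩
    rw [← h]; rfl
  | true =>
    refine ⟨fun hb => by simp at hb, fun _ => (kneading_side hT j).2.2 ?_⟩
    rw [← h]; rfl

lemma chain_of_admissible (hT : IsUnimodal T c) {s : ℕ → Bool} (hs : AdmissibleLeft T c s)
    (m : ℕ) :
    ∃ u : ℕ → ℝ, (∀ i, u i ∈ Set.Icc (0:ℝ) 1) ∧ (∀ i < m + 1, T (u (i+1)) = u i) ∧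
      (∀ i, 1 ≤ i → i ≤ m + 1 → WMatch c (u i) (s (i-1))) := by
  obtain ⟨x, hx, p, hp⟩ := hs m
  refine ⟨fun i => T^[p + m + 1 - i] x, fun i => hT.iter_mem hx _, ?_, ?_⟩
  · intro i hi
    have h1 : p + m + 1 - i = (p + m - i) + 1 := by omega
    have h2 : p + m + 1 - (i+1) = p + m - i := by omega
    simp only [h1, h2, Function.iterate_succ_apply']
  · intro i h1 h2
    have hj : m + 1 - i ≤ m := by omega
    have hpj := hp (m + 1 - i) hj
    rw [show m - (m + 1 - i) = i - 1 from by omega] at hpj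
    show WMatch c (T^[p + m + 1 - i] x) (s (i - 1))
    rw [show p + m + 1 - i = p + (m + 1 - i) from by omega]
    exact wmatch_of_itin hT hpj

lemma uIcc_subset_unit {a b : ℝ} (ha : a ∈ Set.Icc (0:ℝ) 1) (hb : b ∈ Set.Icc (0:ℝ) 1) :
    Set.uIcc a b ⊆ Set.Icc (0:ℝ) 1 := by
  rw [← Set.uIcc_of_le (by norm_num : (0:ℝ) ≤ 1)]
  exact Set.uIcc_subset_uIcc
    (by rwa [Set.uIcc_of_le (by norm_num : (0:ℝ) ≤ 1)])
    (by rwa [Set.uIcc_of_le (by norm_num : (0:ℝ) ≤ 1)])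

lemma wmatch_of_uIcc {u v x : ℝ} {b : Bool} (hu : WMatch c u b) (hv : WMatch c v b)
    (hx : x ∈ Set.uIcc u v) : WMatch c x b := by
  rw [Set.mem_uIcc] at hx
  cases b with
  | false =>
    refine ⟨fun _ => ?_, fun hb => by simp at hb⟩
    have h1 := hu.1 rfl; have h2 := hv.1 rfl
    rcases hx with ⟨_, h⟩ | ⟨_, h⟩ <;> linarith
  | true =>
    refine ⟨fun hb => by simp at hb, fun _ => ?_⟩
    have h1 := hu.2 rfl; have h2 := hv.2 rfl
    rcases hx with ⟨h, _⟩ | ⟨h, _⟩ <;> linarith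

lemma pullback_chain (hT : IsUnimodal T c) {u v : ℕ → ℝ}
    (hu1 : ∀ i, u i ∈ Set.Icc (0:ℝ) 1) (hv1 : ∀ i, v i ∈ Set.Icc (0:ℝ) 1)
    {N L : ℕ} (hcu : ∀ i < L, T (u (i+1)) = u i) (hcv : ∀ i < L, T (v (i+1)) = v i)
    (hstart : c ∈ Set.uIcc (u N) (v N)) :
    ∀ j, N + j ≤ L → ∃ g : ℕ → ℝ, g 0 = c ∧ (∀ l, g l ∈ Set.Icc (0:ℝ) 1) ∧
      (∀ l < j, T (g (l+1)) = g l) ∧ (∀ l ≤ j, g l ∈ Set.uIcc (u (N+l)) (v (N+l))) := by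
  intro j
  induction j with
  | zero =>
    intro _
    refine ⟨fun _ => c, rfl, fun _ => hT.c_mem, fun l hl => absurd hl (Nat.not_lt_zero l),
      fun l hl => ?_⟩
    rw [Nat.le_zero.mp hl]
    simpa using hstart
  | succ j ih =>
    intro hL
    obtain ⟨g, hg0, hgI, hgc, hgm⟩ := ih (by omega)
    have hzj := hgm j le_rfl
    have hsub : Set.uIcc (u (N+j)) (v (N+j)) ⊆ T '' Set.uIcc (u (N+j+1)) (v (N+j+1)) := by
      have hcont : ContinuousOn T (Set.uIcc (u (N+j+1)) (v (N+j+1))) :=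
        hT.1.mono (uIcc_subset_unit (hu1 _) (hv1 _))
      have hiv := intermediate_value_uIcc hcont
      rwa [hcu (N+j) (by omega), hcv (N+j) (by omega)] at hiv
    obtain ⟨w, hw, hTw⟩ := hsub hzj
    refine ⟨Function.update g (j+1) w, ?_, ?_, ?_, ?_⟩
    · rw [Function.update_of_ne (by omega)]; exact hg0
    · intro l
      rcases eq_or_ne l (j+1) with h | h
      · rw [h, Function.update_self]
        exact uIcc_subset_unit (hu1 _) (hv1 _) hw
      · rw [Function.update_of_ne h]; exact hgI l
    · intro l hl
      rcases eq_or_ne l j with h | h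
      · subst h
        rw [Function.update_self, Function.update_of_ne (by omega)]
        exact hTw
      · rw [Function.update_of_ne (by omega : l + 1 ≠ j + 1),
          Function.update_of_ne (by omega : l ≠ j + 1)]
        exact hgc l (by omega)
    · intro l hl
      rcases eq_or_ne l (j+1) with h | h
      · subst h
        rw [Function.update_self]; exact hw
      · rw [Function.update_of_ne h]
        exact hgm l (by omega)

lemma b2f_eq_zero_iff {b : Bool} : b2f b = 0 ↔ b = false := by
  cases b <;> simp [b2f]

lemma b2f_eq_two_iff {b : Bool} : b2f b = 2 ↔ b = true := by
  cases b <;> simp [b2f]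

lemma finite_chain (hT : IsUnimodal T c) {s t : ℕ → Bool}
    (hs : AdmissibleLeft T c s) (ht : AdmissibleLeft T c t)
    {N : ℕ} (hN : 1 ≤ N) (hagree : ∀ i, i ≠ N - 1 → s i = t i) (hdiff : s (N-1) ≠ t (N-1))
    (hpms : PrefixMatch T c s N) (hpmt : PrefixMatch T c t N) (m : ℕ) :
    ∃ z : ℕ → ℝ, z N = c ∧ (∀ n, z n ∈ Set.Icc (0:ℝ) 1) ∧
      (∀ n < N + m, T (z (n+1)) = z n) ∧
      (∀ i < N + m, WMatch c (z (i+1)) (s i) ∧ WMatch c (z (i+1)) (t i)) := by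
  obtain ⟨u, hu1, hu2, hu3⟩ := chain_of_admissible hT hs (N + m)
  obtain ⟨v, hv1, hv2, hv3⟩ := chain_of_admissible hT ht (N + m)
  have hus := hu3 N hN (by omega)
  have hvt := hv3 N hN (by omega)
  have hstart : c ∈ Set.uIcc (u N) (v N) := by
    rw [Set.mem_uIcc]
    cases hbs : s (N-1) with
    | false =>
      have hbt : t (N-1) = true := by
        cases hbt : t (N-1)
        · exact absurd (hbs.trans hbt.symm) hdiff
        · rfl
      exact Or.inl ⟨hus.1 hbs, hvt.2 hbt⟩
    | true =>
      have hbt : t (N-1) = false := by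
        cases hbt : t (N-1)
        · rfl
        · exact absurd (hbs.trans hbt.symm) hdiff
      exact Or.inr ⟨hvt.1 hbt, hus.2 hbs⟩
  obtain ⟨g, hg0, hgI, hgc, hgm⟩ :=
    pullback_chain hT hu1 hv1 hu2 hv2 hstart (m+1) (by omega)
  refine ⟨fun n => if n < N then T^[N - n] c else g (n - N), ?_, ?_, ?_, ?_⟩
  · beta_reduce
    rw [if_neg (lt_irrefl N), Nat.sub_self]; exact hg0
  · intro n
    beta_reduce
    by_cases hn : n < N
    · rw [if_pos hn]; exact hT.iter_mem hT.c_mem _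
    · rw [if_neg hn]; exact hgI _
  · intro n hn
    beta_reduce
    rcases lt_trichotomy (n+1) N with h | h | h
    · rw [if_pos h, if_pos (by omega)]
      rw [show N - n = (N - (n+1)) + 1 from by omega, Function.iterate_succ_apply']
    · rw [if_neg (by omega), if_pos (by omega), show n + 1 - N = 0 from by omega, hg0,
        show N - n = 1 from by omega]
      simp
    · rw [if_neg (by omega), if_neg (by omega)]
      rw [show n + 1 - N = (n - N) + 1 from by omega]
      exact hgc (n - N) (by omega)
  · intro i hi
    beta_reduce
    rcases lt_trichotomy i (N-1) with h | h | h
    · have hz : (if i + 1 < N then T^[N - (i+1)] c else g (i+1-N)) = T^[N-2-i] (T c) := by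
        rw [if_pos (by omega), show N - (i+1) = (N-2-i) + 1 from by omega,
          Function.iterate_succ_apply]
      rw [hz]
      exact ⟨wmatch_of_kneading hT (hpms i (by omega)),
        wmatch_of_kneading hT (hpmt i (by omega))⟩
    · have hz : (if i + 1 < N then T^[N - (i+1)] c else g (i+1-N)) = c := by
        rw [if_neg (by omega), show i + 1 - N = 0 from by omega, hg0]
      rw [hz]
      exact ⟨wmatch_c _, wmatch_c _⟩
    · have hz : (if i + 1 < N then T^[N - (i+1)] c else g (i+1-N)) = g (i+1-N) := by
        rw [if_neg (by omega)]
      rw [hz]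
      have hmem := hgm (i+1-N) (by omega)
      rw [show N + (i+1-N) = i + 1 from by omega] at hmem
      have hws : WMatch c (u (i+1)) (s i) := by
        have := hu3 (i+1) (by omega) (by omega)
        rwa [Nat.add_sub_cancel] at this
      have hwt : WMatch c (v (i+1)) (t i) := by
        have := hv3 (i+1) (by omega) (by omega)
        rwa [Nat.add_sub_cancel] at this
      have hst : s i = t i := hagree i (by omega)
      refine ⟨wmatch_of_uIcc hws ?_ hmem, wmatch_of_uIcc ?_ hwt hmem⟩
      · rwa [hst]
      · rwa [← hst]

lemma isClosed_wmatch_set {α : Type*} [TopologicalSpace α] {f : α → ℝ} (hf : Continuous f)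
    (b : Bool) : IsClosed {y : α | WMatch c (f y) b} := by
  cases b with
  | false =>
    have he : {y : α | WMatch c (f y) false} = {y : α | f y ≤ c} := by
      ext y; simp [WMatch]
    rw [he]; exact isClosed_le hf continuous_const
  | true =>
    have he : {y : α | WMatch c (f y) true} = {y : α | c ≤ f y} := by
      ext y; simp [WMatch]
    rw [he]; exact isClosed_le continuous_const hf

lemma exists_common_point (hT : IsUnimodal T c) {s t : ℕ → Bool}
    (hs : AdmissibleLeft T c s) (ht : AdmissibleLeft T c t)
    {N : ℕ} (hN : 1 ≤ N) (hagree : ∀ i, i ≠ N - 1 → s i = t i) (hdiff : s (N-1) ≠ t (N-1))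
    (hpms : PrefixMatch T c s N) (hpmt : PrefixMatch T c t N) :
    ∃ x : ℕ → ℝ, x N = c ∧ x ∈ basicArc T c s ∧ x ∈ basicArc T c t := by
  classical
  let Y := ℕ → Set.Icc (0:ℝ) 1
  let D : ℕ → Set Y := fun m =>
    {y : Y | ((y N : ℝ) = c ∧
      ∀ n < N + m, (T ((y (n+1) : ℝ)) = (y n : ℝ) ∧
        WMatch c ((y (n+1) : ℝ)) (s n) ∧ WMatch c ((y (n+1) : ℝ)) (t n)))}
  have hcont : ∀ n : ℕ, Continuous (fun y : Y => ((y n : ℝ))) := fun n =>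
    continuous_subtype_val.comp (continuous_apply n)
  have hcontT : ∀ n : ℕ, Continuous (fun y : Y => T ((y n : ℝ))) := fun n =>
    hT.1.comp_continuous (hcont n) (fun y => (y n).2)
  have hclosed : ∀ m, IsClosed (D m) := by
    intro m
    have hD : D m = {y : Y | (y N : ℝ) = c} ∩
        ⋂ (n : ℕ) (_ : n < N + m),
          ({y : Y | T ((y (n+1) : ℝ)) = (y n : ℝ)} ∩
           {y : Y | WMatch c ((y (n+1) : ℝ)) (s n)} ∩
           {y : Y | WMatch c ((y (n+1) : ℝ)) (t n)}) := by
      ext y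
      simp only [D, Set.mem_setOf_eq, Set.mem_inter_iff, Set.mem_iInter]
      exact ⟨fun ⟨h1, h2⟩ => ⟨h1, fun n hn =>
          ⟨⟨(h2 n hn).1, (h2 n hn).2.1⟩, (h2 n hn).2.2⟩⟩,
        fun ⟨h1, h2⟩ => ⟨h1, fun n hn =>
          ⟨(h2 n hn).1.1, (h2 n hn).1.2, (h2 n hn).2⟩⟩⟩
    rw [hD]
    refine IsClosed.inter (isClosed_eq (hcont N) continuous_const) ?_
    refine isClosed_iInter fun n => isClosed_iInter fun _ => ?_
    exact ((isClosed_eq (hcontT (n+1)) (hcont n)).inter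
      (isClosed_wmatch_set (hcont (n+1)) (s n))).inter (isClosed_wmatch_set (hcont (n+1)) (t n))
  have hne : ∀ m, (D m).Nonempty := by
    intro m
    obtain ⟨z, hz1, hz2, hz3, hz4⟩ := finite_chain hT hs ht hN hagree hdiff hpms hpmt m
    refine ⟨fun n => ⟨z n, hz2 n⟩, hz1, fun n hn => ⟨hz3 n hn, (hz4 n hn).1, (hz4 n hn).2⟩⟩
  have hanti : ∀ m, D (m+1) ⊆ D m := by
    intro m y hy
    exact ⟨hy.1, fun n hn => hy.2 n (by omega)⟩
  obtain ⟨y, hy⟩ := IsCompact.nonempty_iInter_of_sequence_nonempty_isCompact_isClosed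
    D hanti hne ((hclosed 0).isCompact) hclosed
  have hym : ∀ m, y ∈ D m := by
    intro m
    exact Set.mem_iInter.mp hy m
  refine ⟨fun n => (y n : ℝ), (hym 0).1, ?_, ?_⟩
  · refine ⟨⟨fun n => (y n).2, fun n => ((hym (n+1)).2 n (by omega)).1⟩, ?_⟩
    intro i
    exact ((hym (i+1)).2 i (by omega)).2.1.symMatch
  · refine ⟨⟨fun n => (y n).2, fun n => ((hym (n+1)).2 n (by omega)).1⟩, ?_⟩
    intro i
    exact ((hym (i+1)).2 i (by omega)).2.2.symMatch

lemma kneadOnes_succ (T : ℝ → ℝ) (c : ℝ) (k : ℕ) :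
    kneadOnes T c (k+1) = kneadOnes T c k + (if kneading T c k = 2 then 1 else 0) := by
  classical
  unfold kneadOnes
  rw [Finset.range_add_one, Finset.filter_insert]
  split_ifs with h
  · rw [Finset.card_insert_of_notMem (by simp)]
  · rw [add_zero]

lemma arc_compare (hT : IsUnimodal T c) {s : ℕ → Bool} {N : ℕ} (hN : 1 ≤ N)
    (hpm : PrefixMatch T c s N) {y : ℕ → ℝ} (hy : y ∈ basicArc T c s) :
    ∀ k, 1 ≤ k → k ≤ N →
      (Even (kneadOnes T c (k-1)) → y (N - k) ≤ T^[k] c) ∧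
      (Odd (kneadOnes T c (k-1)) → T^[k] c ≤ y (N - k)) := by
  obtain ⟨⟨hyI, hyc⟩, hym⟩ := hy
  intro k
  induction k with
  | zero => intro h; omega
  | succ k ih =>
    intro _ hk1
    by_cases hk0 : k = 0
    · subst hk0
      have h0 : kneadOnes T c 0 = 0 := by simp [kneadOnes]
      simp only [Nat.add_sub_cancel, h0]
      constructor
      · intro _
        have hstep := hyc (N-1)
        rw [show N - 1 + 1 = N from by omega] at hstep
        rw [← hstep]
        simpa using hT.le_Tc (hyI N)
      · intro hodd
        exact absurd hodd (by simp)
    · obtain ⟨q, rfl⟩ : ∃ q, k = q + 1 := ⟨k - 1, by omega⟩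
      have ihk := ih (by omega) (by omega)
      simp only [Nat.add_sub_cancel] at ihk ⊢
      -- ihk : about y (N - (q+1)) vs T^[q+1] c with parity kneadOnes q
      have hA_icc : y (N-(q+1)) ∈ Set.Icc (0:ℝ) 1 := hyI _
      have hB_icc : T^[q+1] c ∈ Set.Icc (0:ℝ) 1 := hT.iter_mem hT.c_mem _
      have hside_s : b2f (s (N - (q+1) - 1)) = kneading T c q := by
        have h1 := hpm (N - (q+1) - 1) (by omega)
        rwa [show N - 2 - (N - (q+1) - 1) = q from by omega] at h1
      have hA_w : WMatch c (y (N-(q+1))) (s (N-(q+1)-1)) := by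
        rw [show N - (q+1) = (N - (q+1) - 1) + 1 from by omega]
        exact (hym (N-(q+1)-1)).wMatch
      have hB_eq : T^[q+1] c = T^[q] (T c) := by
        rw [Function.iterate_succ_apply]
      have hstep : T (y (N - (q+1))) = y (N - (q+2)) := by
        have h1 := hyc (N - (q+2))
        rwa [show N - (q+2) + 1 = N - (q+1) from by omega] at h1
      have hBstep : T^[q+2] c = T (T^[q+1] c) := Function.iterate_succ_apply' T (q+1) c
      have hones := kneadOnes_succ T c q
      rcases fin3_cases (kneading T c q) with hμ | hμ | hμ
      · -- symbol 0 : both ≤ c, parity unchanged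
        have hA_le : y (N-(q+1)) ≤ c := hA_w.1 (b2f_eq_zero_iff.mp (hside_s.trans hμ))
        have hB_le : T^[q+1] c ≤ c := hB_eq ▸ (kneading_side hT q).2.1 hμ
        rw [hμ] at hones
        simp only [if_neg (by decide : ¬ ((0:Fin 3) = 2)), add_zero] at hones
        rw [hones]
        constructor
        · intro heven
          rw [← hstep, hBstep]
          exact hT.mono_le hA_icc hB_icc hA_le hB_le (ihk.1 heven)
        · intro hodd
          rw [← hstep, hBstep]
          exact hT.mono_le hB_icc hA_icc hB_le hA_le (ihk.2 hodd)
      · exact absurd hμ (kneading_side hT q).1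
      · -- symbol 1 : both ≥ c, parity flips
        have hA_ge : c ≤ y (N-(q+1)) := hA_w.2 (b2f_eq_two_iff.mp (hside_s.trans hμ))
        have hB_ge : c ≤ T^[q+1] c := hB_eq ▸ (kneading_side hT q).2.2 hμ
        rw [hμ] at hones
        simp only [if_pos rfl] at hones
        rw [hones]
        constructor
        · intro heven
          have hodd : Odd (kneadOnes T c q) := by
            rcases Nat.even_or_odd (kneadOnes T c q) with h | h
            · exact absurd heven (by simp [Nat.even_add_one, h])
            · exact h
          rw [← hstep, hBstep]
          exact hT.anti_le hB_icc hA_icc hB_ge hA_ge (ihk.2 hodd)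
        · intro hodd
          have heven : Even (kneadOnes T c q) := by
            rcases Nat.even_or_odd (kneadOnes T c q) with h | h
            · exact h
            · exact absurd hodd (by simp [Nat.odd_add_one, h])
          rw [← hstep, hBstep]
          exact hT.anti_le hA_icc hB_icc hA_ge hB_ge (ihk.1 heven)

lemma coord_zero {x : ℕ → ℝ} {N : ℕ} (hx : x ∈ invLimitSet T) (hN : x N = c) :
    x 0 = T^[N] c := by
  have key : ∀ k, k ≤ N → x (N - k) = T^[k] c := by
    intro k
    induction k with
    | zero => intro _; simpa using hN
    | succ k ih =>
      intro hk
      have h1 := hx.2 (N - (k+1))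
      rw [show N - (k+1) + 1 = N - k from by omega] at h1
      rw [← h1, ih (by omega), Function.iterate_succ_apply']
  simpa using key N le_rfl

end Stmt6Aux

/-- If `s, t ∈ {0,1}^{-ℕ}` are admissible, all of `τ_L(s), τ_R(s), τ_L(t), τ_R(t)` are
finite, and `s_i = t_i` for all `i < 0` except for `i = -τ_R(s) = -τ_R(t)` (or,
alternatively, except for `i = -τ_L(s) = -τ_L(t)`), then the basic arcs `A(s)` and
`A(t)` have a common boundary point. (Recall `s i` stands for `s_{-(i+1)}`.) -/
theorem stmt6 (T : ℝ → ℝ) (c : ℝ) (hT : IsUnimodal T c) (s t : ℕ → Bool)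
    (hs : AdmissibleLeft T c s) (ht : AdmissibleLeft T c t)
    (aL aR bL bR : ℕ)
    (hsL : IsGreatest (tauLSet T c s) aL) (hsR : IsGreatest (tauRSet T c s) aR)
    (htL : IsGreatest (tauLSet T c t) bL) (htR : IsGreatest (tauRSet T c t) bR)
    (hexc : (aR = bR ∧ (∀ i, i ≠ aR - 1 → s i = t i) ∧ s (aR - 1) ≠ t (aR - 1)) ∨
            (aL = bL ∧ (∀ i, i ≠ aL - 1 → s i = t i) ∧ s (aL - 1) ≠ t (aL - 1))) :
    ∃ x : ℕ → ℝ, IsBoundaryPointOf x (basicArc T c s) ∧ IsBoundaryPointOf x (basicArc T c t) := by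
  rcases hexc with ⟨hab, hagree, hdiff⟩ | ⟨hab, hagree, hdiff⟩
  · -- the τ_R case : common boundary point realizing the supremum of π₀
    obtain ⟨haR1, hpms, hparS⟩ := hsR.1
    obtain ⟨-, hpmt, hparT⟩ := htR.1
    rw [← hab] at hpmt hparT
    obtain ⟨x, hxN, hxs, hxt⟩ := exists_common_point hT hs ht haR1 hagree hdiff hpms hpmt
    have hx0 : proj0 x = T^[aR] c := coord_zero hxs.1 hxN
    have hsup : ∀ (s' : ℕ → Bool), PrefixMatch T c s' aR →
        x ∈ basicArc T c s' → proj0 x = sSup (proj0 '' basicArc T c s') := by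
      intro s' hpm hxmem
      have hub : ∀ r ∈ proj0 '' basicArc T c s', r ≤ T^[aR] c := by
        rintro r ⟨y, hy, rfl⟩
        have h1 := (arc_compare hT haR1 hpm hy aR haR1 le_rfl).1 hparS
        simpa [proj0, Nat.sub_self] using h1
      have hmem : proj0 x ∈ proj0 '' basicArc T c s' := ⟨x, hxmem, rfl⟩
      have hss : sSup (proj0 '' basicArc T c s') = T^[aR] c := by
        refine le_antisymm (csSup_le ⟨_, hmem⟩ hub) ?_
        rw [← hx0]
        exact le_csSup ⟨T^[aR] c, fun r hr => hub r hr⟩ hmem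
      rw [hss]; exact hx0
    exact ⟨x, ⟨hxs, Or.inr (hsup s hpms hxs)⟩, ⟨hxt, Or.inr (hsup t hpmt hxt)⟩⟩
  · -- the τ_L case : common boundary point realizing the infimum of π₀
    obtain ⟨haL1, hpms, hparS⟩ := hsL.1
    obtain ⟨-, hpmt, hparT⟩ := htL.1
    rw [← hab] at hpmt hparT
    have haL1' : 1 ≤ aL := by omega
    obtain ⟨x, hxN, hxs, hxt⟩ := exists_common_point hT hs ht haL1' hagree hdiff hpms hpmt
    have hx0 : proj0 x = T^[aL] c := coord_zero hxs.1 hxN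
    have hinf : ∀ (s' : ℕ → Bool), PrefixMatch T c s' aL →
        x ∈ basicArc T c s' → proj0 x = sInf (proj0 '' basicArc T c s') := by
      intro s' hpm hxmem
      have hlb : ∀ r ∈ proj0 '' basicArc T c s', T^[aL] c ≤ r := by
        rintro r ⟨y, hy, rfl⟩
        have h1 := (arc_compare hT haL1' hpm hy aL haL1' le_rfl).2 hparS
        simpa [proj0, Nat.sub_self] using h1
      have hmem : proj0 x ∈ proj0 '' basicArc T c s' := ⟨x, hxmem, rfl⟩
      have hss : sInf (proj0 '' basicArc T c s') = T^[aL] c := by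
        refine le_antisymm ?_ (le_csInf ⟨_, hmem⟩ hlb)
        rw [← hx0]
        exact csInf_le ⟨T^[aL] c, fun r hr => hlb r hr⟩ hmem
      rw [hss]; exact hx0
    exact ⟨x, ⟨hxs, Or.inl (hinf s hpms hxs)⟩, ⟨hxt, Or.inl (hinf t hpmt hxt)⟩⟩
end

section
/- For every admissible left-infinite sequence s ∈ {0,1}^{-ℕ}: sup π_0(A(s)) = inf{T^n(c) : n ≥ 1, s_{-(n-1)}…s_{-1} = c_1…c_{n-1}, #_1(c_1…c_{n-1}) even} and inf π_0(A(s)) = sup{T^n(c) : n ≥ 1, s_{-(n-1)}…s_{-1} = c_1…c_{n-1}, #_1(c_1…c_{n-1}) odd}. -/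
/-!
Let `J_n ⊆ [0, T c]` be the set of possible coordinates `x_{-n}` of points of `A(s)` as far as
`s_{-n} … s_{-1}` is concerned, and `P_n = Tⁿ(J_n)`. Then `π₀(A(s)) = ⋂ P_n` is a nested
intersection of nonempty compact sets, so its supremum and infimum are the limits of those of `P_n`.

On `J_n` the map `Tⁿ` is strictly monotone, increasing or decreasing according to the parity of
the number of `1`s in `s_{-n} … s_{-1}`. So its extreme values are taken at `0`, at `T c`, or at a
point whose orbit meets `c` before time `n`. In the last two cases the value is a critical value
`Tᵐ(c)` with `s_{-(m-1)} … s_{-1} = c₁ … c_{m-1}` (read off at the last visit to `c`), and it is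
a maximum or a minimum according to the parity of `#₁(c₁ … c_{m-1})`, since every such `Tᵐ(c)`
bounds `P_{m-1} ⊇ P_n` from that side: compare orbits with the orbit of `T c`.

This needs `J_n` not to be a single point when an orbit in it meets `c`. Move the point off `c`,
at its first visit, to the side prescribed by `s`. The later symbols are kept because near `c`
orbits shadow the orbit of `c`; at the returns of `c` to itself they fold onto the side of the
symbol `β` closing the period of the modified kneading sequence, and admissibility forces `s` to
carry `β` there.
-/

open Set Filter Topology Function

section OrderTopology

variable {α : Type*} [TopologicalSpace α] [LinearOrder α] [OrderTopology α] [DenselyOrdered α]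
  {J : Set α} {a b x : α}

theorem exists_mem_gt_of_mem_nhdsWithin_Icc [NoMaxOrder α] (hJ : J ∈ 𝓝[Icc a b] x) (hax : a ≤ x)
    (hxb : x < b) : ∃ w ∈ J, x < w := by
  have hJ' : J ∈ 𝓝[>] x := nhdsWithin_le_of_mem (Icc_mem_nhdsGT_of_mem ⟨hax, hxb⟩) hJ
  exact (Filter.Eventually.and hJ' self_mem_nhdsWithin).exists

theorem exists_mem_lt_of_mem_nhdsWithin_Icc [NoMinOrder α] (hJ : J ∈ 𝓝[Icc a b] x) (hax : a < x)
    (hxb : x ≤ b) : ∃ w ∈ J, w < x := by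
  have hJ' : J ∈ 𝓝[<] x := nhdsWithin_le_of_mem (Icc_mem_nhdsLT_of_mem ⟨hax, hxb⟩) hJ
  exact (Filter.Eventually.and hJ' self_mem_nhdsWithin).exists

end OrderTopology

section NestedCompact

variable {α : Type*} [ConditionallyCompleteLinearOrder α] [TopologicalSpace α] [OrderTopology α]
  {K : ℕ → Set α}

theorem isGreatest_iInter_iInf_sSup (hK : Antitone K) (hc : ∀ n, IsCompact (K n))
    (hne : ∀ n, (K n).Nonempty) : IsGreatest (⋂ n, K n) (⨅ n, sSup (K n)) := by
  have hmem : ∀ n, sSup (K n) ∈ K n := fun n => (hc n).sSup_mem (hne n)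
  have hanti : Antitone fun n => sSup (K n) := fun m n h =>
    csSup_le_csSup (hc m).bddAbove (hne n) (hK h)
  have hbdd : BddBelow (range fun n => sSup (K n)) :=
    (hc 0).bddBelow.mono (range_subset_iff.mpr fun n => hK (Nat.zero_le n) (hmem n))
  refine ⟨mem_iInter.mpr fun k => (hc k).isClosed.mem_of_tendsto
    (tendsto_atTop_ciInf hanti hbdd) ?_, fun a ha => le_ciInf fun n => ?_⟩
  · filter_upwards [eventually_ge_atTop k] with n hn using hK hn (hmem n)
  · exact le_csSup (hc n).bddAbove (mem_iInter.mp ha n)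

theorem isLeast_iInter_iSup_sInf (hK : Antitone K) (hc : ∀ n, IsCompact (K n))
    (hne : ∀ n, (K n).Nonempty) : IsLeast (⋂ n, K n) (⨆ n, sInf (K n)) :=
  isGreatest_iInter_iInf_sSup (α := αᵒᵈ) hK hc hne

end NestedCompact

namespace IsUnimodal

variable {T : ℝ → ℝ} {c : ℝ}

theorem continuousOn (hT : IsUnimodal T c) : ContinuousOn T (Icc 0 1) := hT.1

theorem mapsTo (hT : IsUnimodal T c) : MapsTo T (Icc 0 1) (Icc 0 1) := hT.2.1

theorem map_zero (hT : IsUnimodal T c) : T 0 = 0 := hT.2.2.1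

theorem crit_pos (hT : IsUnimodal T c) : 0 < c := hT.2.2.2.1

theorem crit_lt_one (hT : IsUnimodal T c) : c < 1 := hT.2.2.2.2.1

theorem strictMonoOn (hT : IsUnimodal T c) : StrictMonoOn T (Icc 0 c) := hT.2.2.2.2.2.1

theorem strictAntiOn (hT : IsUnimodal T c) : StrictAntiOn T (Icc c 1) := hT.2.2.2.2.2.2

theorem crit_mem (hT : IsUnimodal T c) : c ∈ Icc (0 : ℝ) 1 := ⟨hT.crit_pos.le, hT.crit_lt_one.le⟩

theorem iterate_mem (hT : IsUnimodal T c) {x : ℝ} (hx : x ∈ Icc (0 : ℝ) 1) (n : ℕ) :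
    T^[n] x ∈ Icc (0 : ℝ) 1 :=
  hT.mapsTo.iterate n hx

theorem continuousOn_iterate (hT : IsUnimodal T c) (n : ℕ) : ContinuousOn T^[n] (Icc 0 1) :=
  hT.continuousOn.iterate hT.mapsTo n

theorem iterate_zero (hT : IsUnimodal T c) (n : ℕ) : T^[n] 0 = 0 :=
  iterate_fixed hT.map_zero n

theorem lt_map_crit (hT : IsUnimodal T c) {x : ℝ} (hx : x ∈ Icc (0 : ℝ) 1) (hne : x ≠ c) :
    T x < T c := by
  rcases hne.lt_or_gt with h | h
  · exact hT.strictMonoOn ⟨hx.1, h.le⟩ ⟨hT.crit_pos.le, le_rfl⟩ h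
  · exact hT.strictAntiOn ⟨le_rfl, hT.crit_lt_one.le⟩ ⟨h.le, hx.2⟩ h

theorem le_map_crit (hT : IsUnimodal T c) {x : ℝ} (hx : x ∈ Icc (0 : ℝ) 1) : T x ≤ T c := by
  rcases eq_or_ne x c with rfl | hne
  · exact le_rfl
  · exact (hT.lt_map_crit hx hne).le

theorem map_crit_mem (hT : IsUnimodal T c) : T c ∈ Icc (0 : ℝ) 1 := hT.mapsTo hT.crit_mem

end IsUnimodal

namespace Unimodal

variable {T : ℝ → ℝ} {c : ℝ} {s : ℕ → Bool}

def OnSide (c : ℝ) (b : Bool) (y : ℝ) : Prop := if b then c ≤ y else y ≤ c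

theorem onSide_self (c : ℝ) (b : Bool) : OnSide c b c := by
  cases b <;> simp [OnSide]

theorem onSide_false {y : ℝ} : OnSide c false y ↔ y ≤ c := Iff.rfl

theorem onSide_true {y : ℝ} : OnSide c true y ↔ c ≤ y := Iff.rfl

theorem symMatch_iff_onSide {y : ℝ} {b : Bool} : SymMatch c y b ↔ OnSide c b y := by
  cases b <;> simp [SymMatch, OnSide, le_iff_lt_or_eq, eq_comm, or_comm]

theorem isClosed_setOf_onSide (c : ℝ) (b : Bool) : IsClosed {y : ℝ | OnSide c b y} := by
  cases b
  · exact isClosed_Iic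
  · exact isClosed_Ici

theorem onSide_decide_lt {y : ℝ} (hy : y ≠ c) : OnSide c (decide (c < y)) y := by
  rcases hy.lt_or_gt with h | h
  · simp [OnSide, h.le, not_lt.mpr h.le]
  · simp [OnSide, h, h.le]

theorem OnSide.eq_decide_lt {y : ℝ} {b : Bool} (h : OnSide c b y) (hy : y ≠ c) :
    b = decide (c < y) := by
  cases b
  · simpa [OnSide] using h
  · simpa [OnSide] using lt_of_le_of_ne h (Ne.symm hy)

theorem OnSide.eq {y : ℝ} {b b' : Bool} (h : OnSide c b y) (h' : OnSide c b' y) (hy : y ≠ c) :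
    b = b' :=
  (h.eq_decide_lt hy).trans (h'.eq_decide_lt hy).symm

theorem eventually_onSide {α : Type*} {l : Filter α} {f : α → ℝ} {y : ℝ} {b : Bool}
    (hf : Tendsto f l (𝓝 y)) (hb : OnSide c b y) (hy : y ≠ c) : ∀ᶠ a in l, OnSide c b (f a) := by
  cases b
  · exact (hf.eventually_lt_const (lt_of_le_of_ne hb hy)).mono fun _ h => h.le
  · exact (hf.eventually_const_lt (lt_of_le_of_ne hb (Ne.symm hy))).mono fun _ h => h.le

def trueCount (F : ℕ → Bool) (k : ℕ) : ℕ := ∑ j ∈ Finset.range k, if F j then 1 else 0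

theorem trueCount_zero (F : ℕ → Bool) : trueCount F 0 = 0 := rfl

theorem trueCount_succ (F : ℕ → Bool) (k : ℕ) :
    trueCount F (k + 1) = trueCount F k + if F k then 1 else 0 :=
  Finset.sum_range_succ _ _

theorem trueCount_congr {F G : ℕ → Bool} {k : ℕ} (h : ∀ j < k, F j = G j) :
    trueCount F k = trueCount G k :=
  Finset.sum_congr rfl fun j hj => by rw [h j (Finset.mem_range.mp hj)]

theorem trueCount_reverse (F : ℕ → Bool) (n : ℕ) :
    trueCount (fun j => F (n - 1 - j)) n = trueCount F n :=
  Finset.sum_range_reflect (fun j => if F j then 1 else 0) n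

def cylinder (T : ℝ → ℝ) (c : ℝ) (F : ℕ → Bool) (k : ℕ) : Set ℝ :=
  {y ∈ Icc 0 1 | ∀ j < k, OnSide c (F j) (T^[j] y)}

theorem cylinder_succ_subset (F : ℕ → Bool) (k : ℕ) :
    cylinder T c F (k + 1) ⊆ cylinder T c F k :=
  fun _ hy => ⟨hy.1, fun j hj => hy.2 j (hj.trans k.lt_succ_self)⟩

theorem strictMonoOn_iterate_cylinder (hT : IsUnimodal T c) (F : ℕ → Bool) (k : ℕ) :
    (Even (trueCount F k) → StrictMonoOn T^[k] (cylinder T c F k)) ∧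
      (Odd (trueCount F k) → StrictAntiOn T^[k] (cylinder T c F k)) := by
  induction k with
  | zero => exact ⟨fun _ => strictMonoOn_id, fun h => absurd h (by simp [trueCount_zero])⟩
  | succ k ih =>
    have hsub := cylinder_succ_subset (T := T) (c := c) F k
    have hside : ∀ y ∈ cylinder T c F (k + 1), OnSide c (F k) (T^[k] y) :=
      fun y hy => hy.2 k k.lt_succ_self
    rw [iterate_succ', trueCount_succ]
    cases hF : F k
    · have hmaps : MapsTo T^[k] (cylinder T c F (k + 1)) (Icc 0 c) := fun y hy =>
        ⟨(hT.iterate_mem hy.1 k).1, onSide_false.mp (hF ▸ hside y hy)⟩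
      simp only [Bool.false_eq_true, if_false, add_zero]
      exact ⟨fun h => hT.strictMonoOn.comp ((ih.1 h).mono hsub) hmaps,
        fun h => hT.strictMonoOn.comp_strictAntiOn ((ih.2 h).mono hsub) hmaps⟩
    · have hmaps : MapsTo T^[k] (cylinder T c F (k + 1)) (Icc c 1) := fun y hy =>
        ⟨onSide_true.mp (hF ▸ hside y hy), (hT.iterate_mem hy.1 k).2⟩
      simp only [if_true, Nat.even_add_one, Nat.odd_add_one, Nat.not_even_iff_odd,
        Nat.not_odd_iff_even]
      exact ⟨fun h => hT.strictAntiOn.comp ((ih.2 h).mono hsub) hmaps,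
        fun h => hT.strictAntiOn.comp_strictMonoOn ((ih.1 h).mono hsub) hmaps⟩

theorem onSide_iterate_cylinder_of_eq_crit (hT : IsUnimodal T c) {F : ℕ → Bool} {k : ℕ}
    {a b : ℝ} (ha : a ∈ cylinder T c F k) (hb : b ∈ cylinder T c F k) (hab : a < b) :
    (T^[k] a = c → T^[k] b ≠ c ∧ OnSide c (decide (Even (trueCount F k))) (T^[k] b)) ∧
      (T^[k] b = c → T^[k] a ≠ c ∧ OnSide c (decide (Odd (trueCount F k))) (T^[k] a)) := by
  obtain ⟨hmono, hanti⟩ := strictMonoOn_iterate_cylinder hT F k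
  rcases Nat.even_or_odd (trueCount F k) with he | ho
  · have h := hmono he ha hb hab
    simp only [he, Nat.not_odd_iff_even.mpr he, decide_true, decide_false, onSide_true,
      onSide_false]
    exact ⟨fun hac => hac ▸ ⟨h.ne', h.le⟩, fun hbc => hbc ▸ ⟨h.ne, h.le⟩⟩
  · have h := hanti ho ha hb hab
    simp only [ho, Nat.not_even_iff_odd.mpr ho, decide_true, decide_false, onSide_true,
      onSide_false]
    exact ⟨fun hac => hac ▸ ⟨h.ne, h.le⟩, fun hbc => hbc ▸ ⟨h.ne', h.le⟩⟩

theorem b2f_injective : Injective b2f := by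
  intro a b h; cases a <;> cases b <;> simp_all [b2f]

theorem b2f_ne_one (b : Bool) : b2f b ≠ 1 := by cases b <;> decide

theorem decide_b2f_eq_two (b : Bool) : decide (b2f b = 2) = b := by cases b <;> decide

theorem rawItin_eq_one_iff {x : ℝ} {n : ℕ} : rawItin T c x n = 1 ↔ T^[n] x = c := by
  unfold rawItin
  split_ifs with h1 h2
  · simp [h1.ne]
  · simp [h2]
  · simp [h2]

theorem rawItin_of_ne {x : ℝ} {n : ℕ} (h : T^[n] x ≠ c) :
    rawItin T c x n = b2f (decide (c < T^[n] x)) := by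
  unfold rawItin b2f
  rcases h.lt_or_gt with h' | h'
  · simp [h', not_lt.mpr h'.le]
  · simp [h', not_lt.mpr h'.le, h'.ne']

theorem kneading_of_not_periodic (hq : ¬ ∃ i, rawItin T c (T c) i = 1) :
    kneading T c = rawItin T c (T c) := by
  unfold kneading
  rw [dif_neg hq]

section Periodic

variable (hq : ∃ i, rawItin T c (T c) i = 1)
include hq

theorem iterate_find_eq : T^[Nat.find hq] (T c) = c := rawItin_eq_one_iff.mp (Nat.find_spec hq)

theorem iterate_ne_of_lt_find {j : ℕ} (hj : j < Nat.find hq) : T^[j] (T c) ≠ c :=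
  fun h => Nat.find_min hq hj (rawItin_eq_one_iff.mpr h)

theorem iterate_mod_period (j : ℕ) : T^[j % (Nat.find hq + 1)] (T c) = T^[j] (T c) := by
  have hper : IsPeriodicPt T (Nat.find hq + 1) (T c) := by
    rw [IsPeriodicPt, IsFixedPt, iterate_succ_apply', iterate_find_eq hq]
  exact hper.iterate_mod_apply j

theorem iterate_eq_crit_iff (j : ℕ) : T^[j] (T c) = c ↔ j % (Nat.find hq + 1) = Nat.find hq := by
  rw [← iterate_mod_period hq]
  have := Nat.mod_lt j (by omega : 0 < Nat.find hq + 1)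
  refine ⟨fun h => ?_, fun h => by rw [h]; exact iterate_find_eq hq⟩
  by_contra hne
  exact iterate_ne_of_lt_find hq (by omega) h

theorem kneading_of_periodic (j : ℕ) :
    kneading T c j =
      if j % (Nat.find hq + 1) = Nat.find hq then
        (if Even (onesCount (rawItin T c (T c)) (Nat.find hq)) then 0 else 2)
      else rawItin T c (T c) (j % (Nat.find hq + 1)) := by
  classical
  set f := Nat.find hq
  set w : Fin 3 → ℕ → Fin 3 := fun b j =>
    if j % (f + 1) = f then b else rawItin T c (T c) (j % (f + 1))
  have hw : ∀ b, ∀ i < f, w b i = rawItin T c (T c) i := fun b i hi => by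
    simp only [w, Nat.mod_eq_of_lt (hi.trans f.lt_succ_self), hi.ne, if_false]
  have hwf : ∀ b, w b f = b := fun b => by simp [w, Nat.mod_eq_of_lt f.lt_succ_self]
  have hcount : onesCount (w 0) f = onesCount (rawItin T c (T c)) f :=
    congrArg Finset.card (Finset.filter_congr fun i hi => by rw [hw 0 i (Finset.mem_range.mp hi)])
  -- `w 0` and `w 2` first differ at `f`, where `w 0` has the smaller symbol
  have hle : PlexLe (w 0) (w 2) ↔ Even (onesCount (rawItin T c (T c)) f) := by
    constructor
    · rintro (⟨k, hagree, hne, hk⟩ | heq)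
      · rcases lt_trichotomy k f with hk' | rfl | hk'
        · exact absurd (by rw [hw 0 k hk', hw 2 k hk']) hne
        · rw [hwf, hwf] at hk
          rw [← hcount]
          rcases hk with ⟨_, he⟩ | ⟨hlt, _⟩
          · exact he
          · exact absurd hlt (by decide)
        · exact absurd (hagree f hk') (by rw [hwf, hwf]; decide)
      · exact absurd (congrFun heq f) (by rw [hwf, hwf]; decide)
    · intro he
      refine Or.inl ⟨f, fun i hi => by rw [hw 0 i hi, hw 2 i hi], by rw [hwf, hwf]; decide,
        Or.inl ⟨by rw [hwf, hwf]; decide, hcount ▸ he⟩⟩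
  unfold kneading
  rw [dif_pos hq]
  change (if PlexLe (w 0) (w 2) then w 0 else w 2) j = _
  by_cases he : Even (onesCount (rawItin T c (T c)) f)
  · rw [if_pos (hle.mpr he), if_pos he]
  · rw [if_neg (mt hle.mp he), if_neg he]

theorem kneading_eq_of_iterate_eq {u : ℕ} (hu : T^[u] (T c) = c) :
    kneading T c u = kneading T c (Nat.find hq) := by
  rw [kneading_of_periodic hq, kneading_of_periodic hq, (iterate_eq_crit_iff hq u).mp hu,
    Nat.mod_eq_of_lt (Nat.find hq).lt_succ_self]

end Periodic

theorem kneading_of_ne {j : ℕ} (h : T^[j] (T c) ≠ c) :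
    kneading T c j = b2f (decide (c < T^[j] (T c))) := by
  by_cases hq : ∃ i, rawItin T c (T c) i = 1
  · have h' : T^[j % (Nat.find hq + 1)] (T c) ≠ c := by rwa [iterate_mod_period hq]
    rw [kneading_of_periodic hq, if_neg (mt (iterate_eq_crit_iff hq j).mpr h), rawItin_of_ne h',
      iterate_mod_period hq]
  · rw [kneading_of_not_periodic hq]
    exact rawItin_of_ne h

theorem kneading_ne_one (j : ℕ) : kneading T c j ≠ 1 := by
  by_cases h : T^[j] (T c) = c
  · have hq : ∃ i, rawItin T c (T c) i = 1 := ⟨j, rawItin_eq_one_iff.mpr h⟩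
    rw [kneading_eq_of_iterate_eq hq h, kneading_of_periodic hq,
      Nat.mod_eq_of_lt (Nat.find hq).lt_succ_self, if_pos rfl]
    split_ifs <;> decide
  · rw [kneading_of_ne h]
    exact b2f_ne_one _

noncomputable def kneadingBool (T : ℝ → ℝ) (c : ℝ) (j : ℕ) : Bool := decide (kneading T c j = 2)

theorem b2f_kneadingBool (j : ℕ) : b2f (kneadingBool T c j) = kneading T c j := by
  have := kneading_ne_one (T := T) (c := c) j
  unfold kneadingBool b2f
  generalize kneading T c j = a at this ⊢
  revert a; decide

theorem kneadOnes_eq_trueCount (k : ℕ) : kneadOnes T c k = trueCount (kneadingBool T c) k := by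
  unfold kneadOnes trueCount kneadingBool
  rw [Finset.card_filter]
  simp only [decide_eq_true_eq]

theorem kneadingBool_of_ne {j : ℕ} (h : T^[j] (T c) ≠ c) :
    kneadingBool T c j = decide (c < T^[j] (T c)) := by
  rw [kneadingBool, kneading_of_ne h, decide_b2f_eq_two]

theorem onSide_kneadingBool (j : ℕ) : OnSide c (kneadingBool T c j) (T^[j] (T c)) := by
  by_cases h : T^[j] (T c) = c
  · rw [h]; exact onSide_self c _
  · rw [kneadingBool_of_ne h]; exact onSide_decide_lt h

theorem kneadingBool_eq_of_onSide {j : ℕ} {b : Bool} (hb : OnSide c b (T^[j] (T c)))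
    (h : T^[j] (T c) ≠ c) : kneadingBool T c j = b :=
  (onSide_kneadingBool j).eq hb h

theorem prefixMatch_iff {s : ℕ → Bool} {n : ℕ} :
    PrefixMatch T c s n ↔ ∀ i < n - 1, s i = kneadingBool T c (n - 2 - i) := by
  simp only [PrefixMatch, ← b2f_kneadingBool, b2f_injective.eq_iff]

/-- The symbol `β` closing the period is chosen so that `c₁ … c_f β` has an even number of `1`s. -/
theorem kneadingBool_find (hq : ∃ i, rawItin T c (T c) i = 1) :
    kneadingBool T c (Nat.find hq) =
      decide (Odd (trueCount (kneadingBool T c) (Nat.find hq))) := by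
  have hcount : trueCount (kneadingBool T c) (Nat.find hq) =
      onesCount (rawItin T c (T c)) (Nat.find hq) := by
    rw [← kneadOnes_eq_trueCount, kneadOnes, onesCount]
    refine congrArg Finset.card (Finset.filter_congr fun i hi => ?_)
    have hi := Finset.mem_range.mp hi
    rw [kneading_of_periodic hq, Nat.mod_eq_of_lt (hi.trans (Nat.lt_succ_self _)), if_neg hi.ne]
  rw [kneadingBool, kneading_of_periodic hq, Nat.mod_eq_of_lt (Nat.find hq).lt_succ_self,
    if_pos rfl, hcount]
  by_cases he : Even (onesCount (rawItin T c (T c)) (Nat.find hq))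
  · simp [he, Nat.not_odd_iff_even.mpr he]
  · simp [he, Nat.not_even_iff_odd.mp he]

theorem iterate_eq_of_iterate_eq_crit {x : ℝ} {f t : ℕ} (hf : T^[f] x = c) (ht : f < t) :
    T^[t] x = T^[t - f - 1] (T c) := by
  obtain ⟨m, rfl⟩ : ∃ m, t = m + 1 + f := ⟨t - f - 1, by omega⟩
  rw [iterate_add_apply, iterate_succ_apply, hf]
  congr 1
  omega

theorem onSide_of_rawItin_eq {x : ℝ} {t : ℕ} {b : Bool} (h : rawItin T c x t = b2f b) :
    OnSide c b (T^[t] x) := by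
  by_cases hc : T^[t] x = c
  · rw [hc]; exact onSide_self c b
  · rw [rawItin_of_ne hc, b2f_injective.eq_iff] at h
    exact h ▸ onSide_decide_lt hc

theorem onSide_of_itin_eq {x : ℝ} {t : ℕ} {b : Bool} (h : itin T c x t = b2f b) :
    OnSide c b (T^[t] x) := by
  unfold itin at h
  by_cases hhit : ∃ i, T^[i] x = c
  · simp only [dif_pos hhit] at h
    split_ifs at h with hlt heq
    · exact onSide_of_rawItin_eq h
    · exact absurd h.symm (b2f_ne_one b)
    · rw [← b2f_kneadingBool, b2f_injective.eq_iff] at h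
      rw [iterate_eq_of_iterate_eq_crit (Nat.find_spec hhit) (by omega), ← h]
      exact onSide_kneadingBool _
  · rw [dif_neg hhit] at h
    exact onSide_of_rawItin_eq h

theorem exists_itin_eq_kneading {x : ℝ} {t : ℕ} (hc : T^[t] x = c) (h : itin T c x t ≠ 1) :
    ∃ u, T^[u] (T c) = c ∧ itin T c x t = kneading T c u := by
  have hhit : ∃ i, T^[i] x = c := ⟨t, hc⟩
  have hle : Nat.find hhit ≤ t := Nat.find_min' hhit hc
  unfold itin at h ⊢
  simp only [dif_pos hhit, if_neg hle.not_gt] at h ⊢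
  rw [if_neg (fun heq => h (if_pos heq))]
  refine ⟨t - Nat.find hhit - 1, ?_, rfl⟩
  rw [← iterate_eq_of_iterate_eq_crit (Nat.find_spec hhit)
    (lt_of_le_of_ne hle fun heq => h (if_pos heq.symm)), hc]

theorem iterate_invLimit {x : ℕ → ℝ} (hx : ∀ n, T (x (n + 1)) = x n) (n j : ℕ) :
    T^[j] (x (n + j)) = x n := by
  induction j with
  | zero => rfl
  | succ j ih => rw [iterate_succ_apply, ← add_assoc, hx, ih]

variable (T c s)

/-- `J_n`: the possible values of the coordinate `x_{-n}` of a point of the basic arc `A(s)`,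
as far as the symbols `s_{-n} … s_{-1}` are concerned. -/
def backCoords (n : ℕ) : Set ℝ :=
  {y ∈ Icc 0 (T c) | ∀ j < n, OnSide c (s (n - 1 - j)) (T^[j] y)}

def frontCoords (n : ℕ) : Set ℝ := T^[n] '' backCoords T c s n

variable {T c s}

theorem backCoords_subset_cylinder (hT : IsUnimodal T c) (n : ℕ) :
    backCoords T c s n ⊆ cylinder T c (fun j => s (n - 1 - j)) n :=
  fun _ hy => ⟨⟨hy.1.1, hy.1.2.trans hT.map_crit_mem.2⟩, hy.2⟩

theorem backCoords_subset_Icc (hT : IsUnimodal T c) (n : ℕ) :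
    backCoords T c s n ⊆ Icc 0 1 :=
  fun _ hy => (backCoords_subset_cylinder hT n hy).1

theorem strictMonoOn_iterate_backCoords (hT : IsUnimodal T c) (n : ℕ) :
    (Even (trueCount s n) → StrictMonoOn T^[n] (backCoords T c s n)) ∧
      (Odd (trueCount s n) → StrictAntiOn T^[n] (backCoords T c s n)) := by
  have h := strictMonoOn_iterate_cylinder hT (fun j => s (n - 1 - j)) n
  rw [trueCount_reverse] at h
  exact ⟨fun he => (h.1 he).mono (backCoords_subset_cylinder hT n),
    fun ho => (h.2 ho).mono (backCoords_subset_cylinder hT n)⟩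

theorem injOn_iterate_backCoords (hT : IsUnimodal T c) (n : ℕ) :
    InjOn T^[n] (backCoords T c s n) := by
  rcases Nat.even_or_odd (trueCount s n) with he | ho
  · exact ((strictMonoOn_iterate_backCoords hT n).1 he).injOn
  · exact ((strictMonoOn_iterate_backCoords hT n).2 ho).injOn

theorem isCompact_backCoords (hT : IsUnimodal T c) (n : ℕ) :
    IsCompact (backCoords T c s n) := by
  have h : backCoords T c s n = Icc 0 (T c) ∩
      ⋂ j ∈ Iio n, (Icc 0 1 ∩ T^[j] ⁻¹' {y | OnSide c (s (n - 1 - j)) y}) := by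
    ext y
    simp only [backCoords, mem_ofPred_eq, mem_inter_iff, mem_iInter, mem_Iio, mem_preimage]
    exact ⟨fun h => ⟨h.1, fun j hj => ⟨backCoords_subset_Icc hT n h, h.2 j hj⟩⟩,
      fun h => ⟨h.1, fun j hj => (h.2 j hj).2⟩⟩
  rw [h]
  exact isCompact_Icc.inter_right <| isClosed_biInter fun j _ =>
    (hT.continuousOn_iterate j).preimage_isClosed_of_isClosed isClosed_Icc
      (isClosed_setOf_onSide c _)

theorem backCoords_nonempty (hT : IsUnimodal T c) (hadm : AdmissibleLeft T c s) (n : ℕ) :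
    (backCoords T c s n).Nonempty := by
  obtain ⟨x, hx, p, hp⟩ := hadm n
  refine ⟨T^[p + 1] x, ⟨(hT.iterate_mem hx _).1, ?_⟩, fun j hj => ?_⟩
  · rw [iterate_succ_apply']
    exact hT.le_map_crit (hT.iterate_mem hx p)
  · have h := onSide_of_itin_eq (hp (j + 1) (by omega))
    rw [← iterate_add_apply, show j + (p + 1) = p + (j + 1) by omega]
    rwa [show n - (j + 1) = n - 1 - j by omega] at h

theorem mapsTo_backCoords (hT : IsUnimodal T c) (n : ℕ) :
    MapsTo T (backCoords T c s (n + 1)) (backCoords T c s n) := fun y hy => by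
  have hy01 := backCoords_subset_Icc hT _ hy
  refine ⟨⟨(hT.mapsTo hy01).1, hT.le_map_crit hy01⟩, fun j hj => ?_⟩
  have h := hy.2 (j + 1) (by omega)
  rwa [show n + 1 - 1 - (j + 1) = n - 1 - j by omega, iterate_succ_apply] at h

theorem mapsTo_iterate_backCoords (hT : IsUnimodal T c) (n j : ℕ) :
    MapsTo T^[j] (backCoords T c s (n + j)) (backCoords T c s n) := by
  induction j generalizing n with
  | zero => exact mapsTo_id _
  | succ j ih =>
    rw [iterate_succ]
    exact (ih n).comp (mapsTo_backCoords hT (n + j))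

theorem frontCoords_succ_subset (hT : IsUnimodal T c) (n : ℕ) :
    frontCoords T c s (n + 1) ⊆ frontCoords T c s n := by
  rintro _ ⟨z, hz, rfl⟩
  exact ⟨T z, mapsTo_backCoords hT n hz, (iterate_succ_apply T n z).symm⟩

theorem antitone_frontCoords (hT : IsUnimodal T c) : Antitone (frontCoords T c s) :=
  antitone_nat_of_succ_le (frontCoords_succ_subset hT)

theorem isCompact_frontCoords (hT : IsUnimodal T c) (n : ℕ) :
    IsCompact (frontCoords T c s n) :=
  (isCompact_backCoords hT n).image_of_continuousOn
    ((hT.continuousOn_iterate n).mono (backCoords_subset_Icc hT n))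

theorem frontCoords_nonempty (hT : IsUnimodal T c) (hadm : AdmissibleLeft T c s) (n : ℕ) :
    (frontCoords T c s n).Nonempty :=
  (backCoords_nonempty hT hadm n).image _

theorem frontCoords_subset_Icc (hT : IsUnimodal T c) (n : ℕ) : frontCoords T c s n ⊆ Icc 0 1 := by
  rintro _ ⟨z, hz, rfl⟩
  exact hT.iterate_mem (backCoords_subset_Icc hT n hz) n

theorem proj0_image_basicArc (hT : IsUnimodal T c) :
    proj0 '' basicArc T c s = ⋂ n, frontCoords T c s n := by
  ext y
  simp only [mem_iInter]
  constructor
  · rintro ⟨x, ⟨⟨hx01, hx⟩, hside⟩, rfl⟩ n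
    refine ⟨x n, ⟨⟨(hx01 n).1, ?_⟩, fun j hj => ?_⟩, ?_⟩
    · rw [← hx n]
      exact hT.le_map_crit (hx01 (n + 1))
    · have h := symMatch_iff_onSide.mp (hside (n - 1 - j))
      rwa [show n - 1 - j + 1 = n - j by omega, ← iterate_invLimit hx (n - j) j,
        Nat.sub_add_cancel hj.le] at h
    · rw [proj0, ← iterate_invLimit hx 0 n, zero_add]
  · intro hy
    let R : Icc (0 : ℝ) 1 → Icc (0 : ℝ) 1 := hT.mapsTo.restrict T _ _
    have hR : Continuous R := hT.continuousOn.mapsToRestrict hT.mapsTo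
    let G : ℕ → Set (ℕ → Icc (0 : ℝ) 1) := fun m =>
      {x | (x 0 : ℝ) = y} ∩ ⋂ k ∈ Iio m, {x | R (x (k + 1)) = x k ∧ OnSide c (s k) (x (k + 1))}
    have hG_closed : ∀ m, IsClosed (G m) := fun m =>
      (isClosed_eq (continuous_subtype_val.comp (continuous_apply 0)) continuous_const).inter
        (isClosed_biInter fun k _ =>
          (isClosed_eq (hR.comp (continuous_apply (k + 1))) (continuous_apply k)).inter
            ((isClosed_setOf_onSide c (s k)).preimage
              (continuous_subtype_val.comp (continuous_apply (k + 1)))))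
    have hG_anti : ∀ m, G (m + 1) ⊆ G m := fun m =>
      inter_subset_inter_right _ (biInter_mono (Iio_subset_Iio m.le_succ) fun _ _ => subset_rfl)
    have hG_ne : ∀ m, (G m).Nonempty := by
      intro m
      obtain ⟨z, hz, rfl⟩ := hy m
      refine ⟨fun k => ⟨T^[m - k] z, hT.iterate_mem (backCoords_subset_Icc hT m hz) _⟩, rfl, ?_⟩
      simp only [mem_iInter, mem_Iio]
      intro k hk
      refine ⟨Subtype.ext ?_, ?_⟩
      · change T (T^[m - (k + 1)] z) = T^[m - k] z
        rw [← iterate_succ_apply' T, Nat.succ_eq_add_one, show m - (k + 1) + 1 = m - k by omega]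
      · simpa [show m - 1 - (m - (k + 1)) = k by omega] using hz.2 (m - (k + 1)) (by omega)
    obtain ⟨x, hx⟩ := IsCompact.nonempty_iInter_of_sequence_nonempty_isCompact_isClosed G
      hG_anti hG_ne (hG_closed 0).isCompact hG_closed
    simp only [mem_iInter] at hx
    have hrel : ∀ k, R (x (k + 1)) = x k ∧ OnSide c (s k) (x (k + 1)) := fun k =>
      (mem_iInter₂.mp (hx (k + 1)).2) k (Nat.lt_succ_self k)
    refine ⟨fun k => x k, ⟨⟨fun k => (x k).2, fun k => congrArg Subtype.val (hrel k).1⟩,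
      fun k => symMatch_iff_onSide.mpr (hrel k).2⟩, (hx 0).1⟩

theorem eventually_onSide_iterate (hT : IsUnimodal T c) {x : ℝ} (hx : x ∈ Icc (0 : ℝ) 1)
    {j : ℕ} {b : Bool} (hb : OnSide c b (T^[j] x)) (hne : T^[j] x ≠ c) :
    ∀ᶠ y in 𝓝[Icc 0 1] x, OnSide c b (T^[j] y) :=
  eventually_onSide ((hT.continuousOn_iterate j).continuousWithinAt hx).tendsto hb hne

theorem backCoords_mem_nhdsWithin (hT : IsUnimodal T c) {n : ℕ} {γ : ℝ}
    (hγ : γ ∈ backCoords T c s n) (hno : ∀ j < n, T^[j] γ ≠ c) :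
    backCoords T c s n ∈ 𝓝[Icc 0 (T c)] γ := by
  have hγ01 := backCoords_subset_Icc hT n hγ
  have hsides : ∀ᶠ y in 𝓝[Icc 0 1] γ, ∀ j ∈ Finset.range n, OnSide c (s (n - 1 - j)) (T^[j] y) :=
    (Finset.range n).eventually_all.mpr fun j hj => eventually_onSide_iterate hT hγ01
      (hγ.2 j (Finset.mem_range.mp hj)) (hno j (Finset.mem_range.mp hj))
  filter_upwards [self_mem_nhdsWithin,
    nhdsWithin_mono γ (Icc_subset_Icc_right hT.map_crit_mem.2) hsides] with y hy hy'
  exact ⟨hy, fun j hj => hy' j (Finset.mem_range.mpr hj)⟩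

theorem trueCount_eq_zero_of_zero_mem (hT : IsUnimodal T c) {n : ℕ}
    (h0 : (0 : ℝ) ∈ backCoords T c s n) : trueCount s n = 0 := by
  rw [← trueCount_reverse]
  refine Finset.sum_eq_zero fun j hj => ?_
  have h := h0.2 j (Finset.mem_range.mp hj)
  rw [hT.iterate_zero] at h
  cases hs : s (n - 1 - j)
  · simp [hs]
  · rw [hs, onSide_true] at h
    exact absurd h (not_le.mpr hT.crit_pos)

theorem backCoords_subset_cylinder_kneading (hT : IsUnimodal T c) {m : ℕ}
    (hpm : PrefixMatch T c s (m + 1)) :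
    backCoords T c s m ⊆ cylinder T c (kneadingBool T c) m := fun y hy => by
  refine ⟨backCoords_subset_Icc hT m hy, fun j hj => ?_⟩
  have h := (prefixMatch_iff.mp hpm) (m - 1 - j) (by omega)
  rw [show m + 1 - 2 - (m - 1 - j) = j by omega] at h
  exact h ▸ hy.2 j hj

theorem map_crit_mem_cylinder_kneading (hT : IsUnimodal T c) (m : ℕ) :
    T c ∈ cylinder T c (kneadingBool T c) m :=
  ⟨hT.map_crit_mem, fun j _ => onSide_kneadingBool j⟩

/-- Like `T c`, a point of `backCoords m` follows `c₁ … c_m`, and it lies below `T c`. -/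
theorem le_iterate_crit_of_prefixMatch (hT : IsUnimodal T c) {m : ℕ}
    (hpm : PrefixMatch T c s (m + 1)) {y : ℝ} (hy : y ∈ frontCoords T c s m) :
    (Even (kneadOnes T c m) → y ≤ T^[m + 1] c) ∧ (Odd (kneadOnes T c m) → T^[m + 1] c ≤ y) := by
  obtain ⟨z, hz, rfl⟩ := hy
  have hzcyl := backCoords_subset_cylinder_kneading hT hpm hz
  have hTc := map_crit_mem_cylinder_kneading hT m
  have hmono := strictMonoOn_iterate_cylinder hT (kneadingBool T c) m
  rw [iterate_succ_apply, kneadOnes_eq_trueCount]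
  exact ⟨fun he => (hmono.1 he).monotoneOn hzcyl hTc hz.1.2,
    fun ho => (hmono.2 ho).antitoneOn hzcyl hTc hz.1.2⟩

theorem prefixMatch_of_map_crit_mem {m : ℕ} (hTc : T c ∈ backCoords T c s m)
    (hno : ∀ j < m, T^[j] (T c) ≠ c) :
    PrefixMatch T c s (m + 1) ∧ kneadOnes T c m = trueCount s m := by
  have hword : ∀ j < m, s (m - 1 - j) = kneadingBool T c j := fun j hj =>
    (kneadingBool_eq_of_onSide (hTc.2 j hj) (hno j hj)).symm
  refine ⟨prefixMatch_iff.mpr fun i hi => ?_, ?_⟩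
  · rw [show m + 1 - 2 - i = m - 1 - i by omega, ← hword (m - 1 - i) (by omega)]
    congr 1
    omega
  · rw [kneadOnes_eq_trueCount, ← trueCount_reverse s, trueCount_congr hword]

/-- The critical value is read off at the last visit of the orbit of `γ` to `c`. -/
theorem exists_prefixMatch_of_hit (hT : IsUnimodal T c) {n : ℕ} {γ : ℝ}
    (hγ : γ ∈ backCoords T c s n) (hhit : ∃ j < n, T^[j] γ = c) :
    ∃ m, PrefixMatch T c s (m + 1) ∧ T^[n] γ = T^[m + 1] c ∧
      (Even (kneadOnes T c m) → IsMaxOn T^[n] (backCoords T c s n) γ) ∧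
      (Odd (kneadOnes T c m) → IsMinOn T^[n] (backCoords T c s n) γ) := by
  classical
  obtain ⟨j₁, hj₁, hj₁c⟩ := hhit
  set jM := Nat.findGreatest (fun j => T^[j] γ = c) (n - 1)
  have hjM : T^[jM] γ = c :=
    Nat.findGreatest_spec (P := fun j => T^[j] γ = c) (n := n - 1) (m := j₁) (by omega) hj₁c
  have hjMn : jM < n := by have := Nat.findGreatest_le (P := fun j => T^[j] γ = c) (n - 1); omega
  set m := n - jM - 1
  have hn : n = m + (jM + 1) := by omega
  have hTc_eq : T^[jM + 1] γ = T c := by rw [iterate_succ_apply', hjM]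
  have hTc : T c ∈ backCoords T c s m :=
    hTc_eq ▸ mapsTo_iterate_backCoords hT m (jM + 1) (hn ▸ hγ)
  have hno : ∀ j < m, T^[j] (T c) ≠ c := fun j hj => by
    have := Nat.findGreatest_is_greatest (P := fun j => T^[j] γ = c) (n := n - 1)
      (k := j + (jM + 1)) (by omega) (by omega)
    rwa [iterate_add_apply, hTc_eq] at this
  obtain ⟨hpm, -⟩ := prefixMatch_of_map_crit_mem hTc hno
  have hval : T^[n] γ = T^[m + 1] c := by
    rw [hn, iterate_add_apply, hTc_eq, iterate_succ_apply]
  have hbound : ∀ δ ∈ backCoords T c s n, T^[n] δ ∈ frontCoords T c s m := fun δ hδ =>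
    antitone_frontCoords hT (by omega : m ≤ n) ⟨δ, hδ, rfl⟩
  refine ⟨m, hpm, hval, fun he δ hδ => ?_, fun ho δ hδ => ?_⟩
  · exact hval ▸ (le_iterate_crit_of_prefixMatch hT hpm (hbound δ hδ)).1 he
  · exact hval ▸ (le_iterate_crit_of_prefixMatch hT hpm (hbound δ hδ)).2 ho

section Periodic

variable (hq : ∃ i, rawItin T c (T c) i = 1)
include hq

theorem onSide_kneadingBool_find (hT : IsUnimodal T c) {y : ℝ}
    (hy : y ∈ cylinder T c (kneadingBool T c) (Nat.find hq)) (hyc : y ≤ T c) :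
    OnSide c (kneadingBool T c (Nat.find hq)) (T^[Nat.find hq] y) ∧
      (y < T c → T^[Nat.find hq] y ≠ c) := by
  rcases hyc.lt_or_eq with hlt | rfl
  · obtain ⟨hne, hside⟩ := (onSide_iterate_cylinder_of_eq_crit hT hy
      (map_crit_mem_cylinder_kneading hT _) hlt).2 (iterate_find_eq hq)
    rw [kneadingBool_find hq]
    exact ⟨hside, fun _ => hne⟩
  · rw [iterate_find_eq hq]
    exact ⟨onSide_self _ _, fun h => absurd h (lt_irrefl _)⟩

/-- Admissibility forces the symbol following a full copy of `c₁ … c_f` in `s` to be `β`: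
any point of `[0, T c]` following `c₁ … c_f` lands on the `β`-side of `c` at time `f`. -/
theorem eq_kneadingBool_find_of_admissible (hT : IsUnimodal T c) (hadm : AdmissibleLeft T c s)
    {i : ℕ} (hctx : ∀ r < Nat.find hq, s (i + Nat.find hq - r) = kneadingBool T c r) :
    s i = kneadingBool T c (Nat.find hq) := by
  set f := Nat.find hq
  obtain ⟨x, hx, p, hp⟩ := hadm (i + f + 1)
  have hitin : ∀ r ≤ f, itin T c x (p + 1 + r) = b2f (s (i + f - r)) := fun r hr => by
    have h := hp (r + 1) (by omega)
    rwa [show p + (r + 1) = p + 1 + r by omega, show i + f + 1 - (r + 1) = i + f - r by omega] at h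
  have hiter : ∀ r, T^[r] (T^[p + 1] x) = T^[p + 1 + r] x := fun r => by
    rw [← iterate_add_apply, add_comm]
  have hy : T^[p + 1] x ∈ cylinder T c (kneadingBool T c) f :=
    ⟨hT.iterate_mem hx _, fun r hr => hiter r ▸ hctx r hr ▸ onSide_of_itin_eq (hitin r hr.le)⟩
  have hyc : T^[p + 1] x ≤ T c := by
    rw [iterate_succ_apply']
    exact hT.le_map_crit (hT.iterate_mem hx p)
  have hslot : OnSide c (s i) (T^[f] (T^[p + 1] x)) := by
    have h := onSide_of_itin_eq (hitin f le_rfl)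
    rwa [Nat.add_sub_cancel, ← hiter] at h
  by_cases hc : T^[f] (T^[p + 1] x) = c
  · obtain ⟨u, hu, hux⟩ := exists_itin_eq_kneading (hiter f ▸ hc)
      (by rw [hitin f le_rfl]; exact b2f_ne_one _)
    rw [hitin f le_rfl, Nat.add_sub_cancel, kneading_eq_of_iterate_eq hq hu,
      ← b2f_kneadingBool] at hux
    exact b2f_injective hux
  · exact hslot.eq (onSide_kneadingBool_find hq hT hy hyc).1 hc

/-- Near `c`, one period of the critical orbit folds `[0,1] \ {c}` onto the `β`-side of `c`. -/
theorem tendsto_iterate_period (hT : IsUnimodal T c) :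
    Tendsto T^[Nat.find hq + 1] (𝓝[Icc 0 1 \ {c}] c)
      (𝓝[Icc 0 1 \ {c} ∩ {y | OnSide c (kneadingBool T c (Nat.find hq)) y}] c) := by
  set f := Nat.find hq
  have hfix : T^[f + 1] c = c := by rw [iterate_succ_apply, iterate_find_eq hq]
  have hcont : Tendsto T^[f + 1] (𝓝[Icc 0 1 \ {c}] c) (𝓝 c) := by
    have h := ((hT.continuousOn_iterate (f + 1)).continuousWithinAt hT.crit_mem).tendsto
    rw [hfix] at h
    exact h.mono_left (nhdsWithin_mono _ sdiff_subset)
  have hcyl : ∀ᶠ z in 𝓝[Icc 0 1] c, ∀ r ∈ Finset.range f,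
      OnSide c (kneadingBool T c r) (T^[r] (T z)) :=
    ((hT.continuousOn.continuousWithinAt hT.crit_mem).tendsto_nhdsWithin hT.mapsTo).eventually
      ((Finset.range f).eventually_all.mpr fun r hr => eventually_onSide_iterate hT
        hT.map_crit_mem (onSide_kneadingBool r) (iterate_ne_of_lt_find hq (Finset.mem_range.mp hr)))
  refine tendsto_nhdsWithin_iff.mpr ⟨hcont, ?_⟩
  filter_upwards [self_mem_nhdsWithin, nhdsWithin_mono _ sdiff_subset hcyl] with z hz hzcyl
  have hTz : T z ∈ cylinder T c (kneadingBool T c) f :=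
    ⟨hT.mapsTo hz.1, fun r hr => hzcyl r (Finset.mem_range.mpr hr)⟩
  obtain ⟨hside, hne⟩ := onSide_kneadingBool_find hq hT hTz (hT.le_map_crit hz.1)
  rw [iterate_succ_apply]
  exact ⟨⟨hT.iterate_mem (hT.mapsTo hz.1) f, hne (hT.lt_map_crit hz.1 hz.2)⟩, hside⟩

theorem eventually_onSide_iterate_period (hT : IsUnimodal T c) (t : ℕ) :
    ∀ᶠ z in 𝓝[Icc 0 1 \ {c}] c,
      OnSide c (kneadingBool T c (Nat.find hq)) (T^[(Nat.find hq + 1) * (t + 1)] z) := by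
  set S := Icc 0 1 \ {c} ∩ {y | OnSide c (kneadingBool T c (Nat.find hq)) y}
  have hfold := tendsto_iterate_period hq hT
  suffices h : Tendsto T^[(Nat.find hq + 1) * (t + 1)] (𝓝[Icc 0 1 \ {c}] c) (𝓝[S] c) from
    (h.eventually self_mem_nhdsWithin).mono fun _ hz => hz.2
  induction t with
  | zero => simpa using hfold
  | succ t ih =>
    rw [Nat.mul_succ, iterate_add]
    exact ih.comp (hfold.mono_right (nhdsWithin_mono _ inter_subset_left))

end Periodic

/-- At the returns of `c` to itself the side is kept by the fold, together with the symbol that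
admissibility forces on `s` there; elsewhere by continuity. -/
theorem eventually_onSide_of_crit (hT : IsUnimodal T c) (hadm : AdmissibleLeft T c s) {i : ℕ}
    (hcrit : ∀ k, 1 ≤ k → k ≤ i → OnSide c (s (i - k)) (T^[k] c)) :
    ∀ᶠ z in 𝓝[Icc 0 1 \ {c}] c, ∀ k ∈ Finset.Icc 1 i, OnSide c (s (i - k)) (T^[k] z) := by
  refine (Finset.Icc 1 i).eventually_all.mpr fun k hk => ?_
  obtain ⟨hk1, hki⟩ := Finset.mem_Icc.mp hk
  by_cases hkc : T^[k] c = c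
  · have hTk : T^[k - 1] (T c) = c := by
      rwa [← iterate_succ_apply, Nat.succ_eq_add_one, Nat.sub_add_cancel hk1]
    have hq : ∃ j, rawItin T c (T c) j = 1 := ⟨k - 1, rawItin_eq_one_iff.mpr hTk⟩
    set f := Nat.find hq
    obtain ⟨t, rfl⟩ : ∃ t, k = (f + 1) * (t + 1) := by
      refine ⟨(k - 1) / (f + 1), ?_⟩
      have h := Nat.div_add_mod (k - 1) (f + 1)
      rw [(iterate_eq_crit_iff hq (k - 1)).mp hTk] at h
      rw [Nat.mul_succ]
      omega
    have hfk : f + 1 ≤ (f + 1) * (t + 1) := Nat.le_mul_of_pos_right _ (Nat.succ_pos t)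
    suffices hslot : s (i - (f + 1) * (t + 1)) = kneadingBool T c f by
      rw [hslot]
      exact eventually_onSide_iterate_period hq hT t
    refine eq_kneadingBool_find_of_admissible hq hT hadm fun r hr => ?_
    have hside := hcrit ((f + 1) * (t + 1) - f + r) (by omega) (by omega)
    have hret : T^[(f + 1) * (t + 1) - f + r] c = T^[r] (T c) := by
      rw [show (f + 1) * (t + 1) - f + r = (f + 1) * t + r + 1 by rw [Nat.mul_succ]; omega,
        iterate_succ_apply, ← iterate_mod_period hq, Nat.mul_add_mod_self_left,
        Nat.mod_eq_of_lt (by omega)]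
    rw [hret, show i - ((f + 1) * (t + 1) - f + r) = i - (f + 1) * (t + 1) + f - r by omega]
      at hside
    exact (kneadingBool_eq_of_onSide hside (iterate_ne_of_lt_find hq hr)).symm
  · exact (eventually_onSide_iterate hT hT.crit_mem (hcrit k hk1 hki) hkc).filter_mono
      (nhdsWithin_mono _ sdiff_subset)

theorem eq_decide_odd_of_map_crit_mem (hT : IsUnimodal T c) (hadm : AdmissibleLeft T c s)
    {n j₀ : ℕ} (hTc : T c ∈ backCoords T c s n) (hj₀ : j₀ < n) (hhit : T^[j₀] (T c) = c)
    (hfirst : ∀ j < j₀, T^[j] (T c) ≠ c) :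
    s (n - 1 - j₀) = decide (Odd (trueCount (fun j => s (n - 1 - j)) j₀)) := by
  have hq : ∃ j, rawItin T c (T c) j = 1 := ⟨j₀, rawItin_eq_one_iff.mpr hhit⟩
  have hf : Nat.find hq = j₀ := le_antisymm (Nat.find_min' hq (rawItin_eq_one_iff.mpr hhit))
    (not_lt.mp fun h => hfirst _ h (iterate_find_eq hq))
  have hword : ∀ j < j₀, s (n - 1 - j) = kneadingBool T c j := fun j hj =>
    (kneadingBool_eq_of_onSide (hTc.2 j (by omega)) (hfirst j hj)).symm
  rw [trueCount_congr hword, ← hf, ← kneadingBool_find hq]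
  refine eq_kneadingBool_find_of_admissible hq hT hadm fun r hr => ?_
  rw [show n - 1 - Nat.find hq + Nat.find hq - r = n - 1 - r by omega]
  exact hword r (hf ▸ hr)

theorem eventually_mem_backCoords_of_first_hit (hT : IsUnimodal T c)
    (hadm : AdmissibleLeft T c s) {n j₀ : ℕ} {γ : ℝ} (hγ : γ ∈ backCoords T c s n) (hj₀ : j₀ < n)
    (hγc : T^[j₀] γ = c) (hfirst : ∀ j < j₀, T^[j] γ ≠ c) :
    ∀ᶠ w in 𝓝[Icc 0 (T c)] γ, w ∈ cylinder T c (fun j => s (n - 1 - j)) j₀ ∧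
      (T^[j₀] w ≠ c → OnSide c (s (n - 1 - j₀)) (T^[j₀] w) → w ∈ backCoords T c s n) := by
  have hγ01 := backCoords_subset_Icc hT n hγ
  set i := n - 1 - j₀
  have hbefore : ∀ᶠ w in 𝓝[Icc 0 1] γ, ∀ j ∈ Finset.range j₀,
      OnSide c (s (n - 1 - j)) (T^[j] w) :=
    (Finset.range j₀).eventually_all.mpr fun j hj => eventually_onSide_iterate hT hγ01
      (hγ.2 j ((Finset.mem_range.mp hj).trans hj₀)) (hfirst j (Finset.mem_range.mp hj))
  have hafter : ∀ᶠ w in 𝓝[Icc 0 1] γ, T^[j₀] w ≠ c →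
      ∀ k ∈ Finset.Icc 1 i, OnSide c (s (i - k)) (T^[k] (T^[j₀] w)) := by
    have hcrit : ∀ k, 1 ≤ k → k ≤ i → OnSide c (s (i - k)) (T^[k] c) := fun k _ hk => by
      have h := hγ.2 (k + j₀) (by omega)
      rwa [iterate_add_apply, hγc, show n - 1 - (k + j₀) = i - k by omega] at h
    have h := eventually_onSide_of_crit hT hadm hcrit
    rw [sdiff_eq, nhdsWithin_inter', eventually_inf_principal] at h
    exact (hγc ▸ ((hT.continuousOn_iterate j₀).continuousWithinAt hγ01).tendsto_nhdsWithin
      (hT.mapsTo.iterate j₀)).eventually h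
  have hle : 𝓝[Icc 0 (T c)] γ ≤ 𝓝[Icc 0 1] γ :=
    nhdsWithin_mono γ (Icc_subset_Icc_right hT.map_crit_mem.2)
  filter_upwards [self_mem_nhdsWithin, hle hbefore, hle hafter] with w hw hw₁ hw₂
  refine ⟨⟨⟨hw.1, hw.2.trans hT.map_crit_mem.2⟩, fun j hj => hw₁ j (Finset.mem_range.mpr hj)⟩,
    fun hne hside => ⟨hw, fun j hj => ?_⟩⟩
  rcases lt_trichotomy j j₀ with h | rfl | h
  · exact hw₁ j (Finset.mem_range.mpr h)
  · exact hside
  · have h' := hw₂ hne (j - j₀) (Finset.mem_Icc.mpr ⟨by omega, by omega⟩)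
    rwa [← iterate_add_apply, Nat.sub_add_cancel h.le, show i - (j - j₀) = n - 1 - j by omega]
      at h'

/-- Move the point off `c` at its first visit, to the side prescribed by `s`. -/
theorem backCoords_nontrivial (hT : IsUnimodal T c) (hadm : AdmissibleLeft T c s) {n : ℕ}
    {γ : ℝ} (hγ : γ ∈ backCoords T c s n) (hhit : ∃ j < n, T^[j] γ = c) :
    (backCoords T c s n).Nontrivial := by
  classical
  have hex : ∃ j, T^[j] γ = c := hhit.imp fun _ h => h.2
  set j₀ := Nat.find hex
  obtain ⟨j₁, hj₁n, hj₁⟩ := hhit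
  have hj₀ : j₀ < n := (Nat.find_min' hex hj₁).trans_lt hj₁n
  have hγc : T^[j₀] γ = c := Nat.find_spec hex
  have hfirst : ∀ j < j₀, T^[j] γ ≠ c := fun j hj => Nat.find_min hex hj
  have hnear := eventually_mem_backCoords_of_first_hit hT hadm hγ hj₀ hγc hfirst
  have hγcyl : γ ∈ cylinder T c (fun j => s (n - 1 - j)) j₀ :=
    ⟨backCoords_subset_Icc hT n hγ, fun j hj => hγ.2 j (hj.trans hj₀)⟩
  by_cases hdir : s (n - 1 - j₀) = decide (Even (trueCount (fun j => s (n - 1 - j)) j₀))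
  · have hγTc : γ < T c := by
      refine lt_of_le_of_ne hγ.1.2 fun hγTc => ?_
      rw [hγTc] at hγ hγc hfirst
      simp [eq_decide_odd_of_map_crit_mem hT hadm hγ hj₀ hγc hfirst,
        ← Nat.not_even_iff_odd] at hdir
    obtain ⟨w, ⟨hwcyl, hwmem⟩, hγw⟩ := exists_mem_gt_of_mem_nhdsWithin_Icc hnear hγ.1.1 hγTc
    obtain ⟨hne, hside⟩ := (onSide_iterate_cylinder_of_eq_crit hT hγcyl hwcyl hγw).1 hγc
    exact ⟨w, hwmem hne (hdir ▸ hside), γ, hγ, hγw.ne'⟩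
  · have hγ0 : 0 < γ := by
      refine lt_of_le_of_ne hγ.1.1 fun h0 => ?_
      rw [← h0, hT.iterate_zero] at hγc
      exact hT.crit_pos.ne hγc
    obtain ⟨w, ⟨hwcyl, hwmem⟩, hwγ⟩ := exists_mem_lt_of_mem_nhdsWithin_Icc hnear hγ0 hγ.1.2
    obtain ⟨hne, hside⟩ := (onSide_iterate_cylinder_of_eq_crit hT hwcyl hγcyl hwγ).2 hγc
    have hdir' : s (n - 1 - j₀) = decide (Odd (trueCount (fun j => s (n - 1 - j)) j₀)) := by
      simpa [← Nat.not_even_iff_odd, Bool.eq_not_iff] using hdir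
    exact ⟨w, hwmem hne (hdir' ▸ hside), γ, hγ, hwγ.ne⟩

theorem not_isMaxOn_and_isMinOn_of_hit (hT : IsUnimodal T c) (hadm : AdmissibleLeft T c s)
    {n : ℕ} {γ : ℝ} (hγ : γ ∈ backCoords T c s n) (hhit : ∃ j < n, T^[j] γ = c) :
    ¬ (IsMaxOn T^[n] (backCoords T c s n) γ ∧ IsMinOn T^[n] (backCoords T c s n) γ) := by
  rintro ⟨hmax, hmin⟩
  obtain ⟨y, hy, hyγ⟩ := (backCoords_nontrivial hT hadm hγ hhit).exists_ne γ
  exact hyγ (injOn_iterate_backCoords hT n hy hγ (le_antisymm (hmax hy) (hmin hy)))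

theorem exists_even_match_of_isMaxOn (hT : IsUnimodal T c) (hadm : AdmissibleLeft T c s)
    {n : ℕ} {γ : ℝ} (hγ : γ ∈ backCoords T c s n) (hmax : IsMaxOn T^[n] (backCoords T c s n) γ) :
    ∃ m, PrefixMatch T c s (m + 1) ∧ Even (kneadOnes T c m) ∧ T^[n] γ = T^[m + 1] c := by
  by_cases hhit : ∃ j < n, T^[j] γ = c
  · obtain ⟨m, hpm, hval, -, hmin⟩ := exists_prefixMatch_of_hit hT hγ hhit
    refine ⟨m, hpm, ?_, hval⟩
    by_contra hodd
    exact not_isMaxOn_and_isMinOn_of_hit hT hadm hγ hhit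
      ⟨hmax, hmin (Nat.not_even_iff_odd.mp hodd)⟩
  push Not at hhit
  have hnhds := backCoords_mem_nhdsWithin hT hγ hhit
  rcases Nat.even_or_odd (trueCount s n) with he | ho
  · obtain rfl : γ = T c := by
      by_contra hne
      obtain ⟨w, hw, hγw⟩ :=
        exists_mem_gt_of_mem_nhdsWithin_Icc hnhds hγ.1.1 (lt_of_le_of_ne hγ.1.2 hne)
      exact ((strictMonoOn_iterate_backCoords hT n).1 he hγ hw hγw).not_ge (hmax hw)
    obtain ⟨hpm, hcount⟩ := prefixMatch_of_map_crit_mem hγ hhit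
    exact ⟨n, hpm, hcount ▸ he, (iterate_succ_apply T n c).symm⟩
  · obtain rfl : γ = 0 := by
      by_contra hne
      obtain ⟨w, hw, hwγ⟩ := exists_mem_lt_of_mem_nhdsWithin_Icc hnhds
        (lt_of_le_of_ne hγ.1.1 (Ne.symm hne)) hγ.1.2
      exact ((strictMonoOn_iterate_backCoords hT n).2 ho hw hγ hwγ).not_ge (hmax hw)
    rw [trueCount_eq_zero_of_zero_mem hT hγ] at ho
    exact absurd ho Nat.not_odd_zero

theorem exists_odd_match_of_isMinOn (hT : IsUnimodal T c) (hadm : AdmissibleLeft T c s)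
    {n : ℕ} {γ : ℝ} (hγ : γ ∈ backCoords T c s n) (hmin : IsMinOn T^[n] (backCoords T c s n) γ) :
    (∃ m, PrefixMatch T c s (m + 1) ∧ Odd (kneadOnes T c m) ∧ T^[n] γ = T^[m + 1] c) ∨
      T^[n] γ = 0 := by
  by_cases hhit : ∃ j < n, T^[j] γ = c
  · obtain ⟨m, hpm, hval, hmax, -⟩ := exists_prefixMatch_of_hit hT hγ hhit
    refine Or.inl ⟨m, hpm, ?_, hval⟩
    by_contra hodd
    exact not_isMaxOn_and_isMinOn_of_hit hT hadm hγ hhit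
      ⟨hmax (Nat.not_odd_iff_even.mp hodd), hmin⟩
  push Not at hhit
  have hnhds := backCoords_mem_nhdsWithin hT hγ hhit
  rcases Nat.even_or_odd (trueCount s n) with he | ho
  · obtain rfl : γ = 0 := by
      by_contra hne
      obtain ⟨w, hw, hwγ⟩ := exists_mem_lt_of_mem_nhdsWithin_Icc hnhds
        (lt_of_le_of_ne hγ.1.1 (Ne.symm hne)) hγ.1.2
      exact ((strictMonoOn_iterate_backCoords hT n).1 he hw hγ hwγ).not_ge (hmin hw)
    exact Or.inr (hT.iterate_zero n)
  · obtain rfl : γ = T c := by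
      by_contra hne
      obtain ⟨w, hw, hγw⟩ :=
        exists_mem_gt_of_mem_nhdsWithin_Icc hnhds hγ.1.1 (lt_of_le_of_ne hγ.1.2 hne)
      exact ((strictMonoOn_iterate_backCoords hT n).2 ho hγ hw hγw).not_ge (hmin hw)
    obtain ⟨hpm, hcount⟩ := prefixMatch_of_map_crit_mem hγ hhit
    exact Or.inl ⟨n, hpm, hcount ▸ ho, (iterate_succ_apply T n c).symm⟩

theorem exists_even_match_eq_sSup (hT : IsUnimodal T c) (hadm : AdmissibleLeft T c s) (n : ℕ) :
    ∃ m, PrefixMatch T c s (m + 1) ∧ Even (kneadOnes T c m) ∧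
      sSup (frontCoords T c s n) = T^[m + 1] c := by
  obtain ⟨γ, hγ, hmax⟩ := (isCompact_backCoords hT n).exists_isMaxOn
    (backCoords_nonempty hT hadm n) ((hT.continuousOn_iterate n).mono (backCoords_subset_Icc hT n))
  have hsup : sSup (frontCoords T c s n) = T^[n] γ :=
    IsGreatest.csSup_eq ⟨mem_image_of_mem _ hγ, forall_mem_image.mpr fun _ hx => hmax hx⟩
  obtain ⟨m, hpm, he, hval⟩ := exists_even_match_of_isMaxOn hT hadm hγ hmax
  exact ⟨m, hpm, he, hsup.trans hval⟩

theorem exists_odd_match_eq_sInf (hT : IsUnimodal T c) (hadm : AdmissibleLeft T c s) (n : ℕ) :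
    (∃ m, PrefixMatch T c s (m + 1) ∧ Odd (kneadOnes T c m) ∧
      sInf (frontCoords T c s n) = T^[m + 1] c) ∨ sInf (frontCoords T c s n) = 0 := by
  obtain ⟨γ, hγ, hmin⟩ := (isCompact_backCoords hT n).exists_isMinOn
    (backCoords_nonempty hT hadm n) ((hT.continuousOn_iterate n).mono (backCoords_subset_Icc hT n))
  have hinf : sInf (frontCoords T c s n) = T^[n] γ :=
    IsLeast.csInf_eq ⟨mem_image_of_mem _ hγ, forall_mem_image.mpr fun _ hx => hmin hx⟩
  rw [hinf]
  rcases exists_odd_match_of_isMinOn hT hadm hγ hmin with ⟨m, hpm, ho, hval⟩ | h0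
  · exact Or.inl ⟨m, hpm, ho, hval⟩
  · exact Or.inr h0

variable (T c s) in
def matchedCritValues (P : ℕ → Prop) : Set ℝ :=
  {y | ∃ n : ℕ, 1 ≤ n ∧ PrefixMatch T c s n ∧ P (kneadOnes T c (n - 1)) ∧ y = T^[n] c}

theorem iterate_mem_matchedCritValues {P : ℕ → Prop} {m : ℕ} (hpm : PrefixMatch T c s (m + 1))
    (hP : P (kneadOnes T c m)) : T^[m + 1] c ∈ matchedCritValues T c s P :=
  ⟨m + 1, by omega, hpm, hP, rfl⟩

theorem forall_mem_matchedCritValues {P : ℕ → Prop} {Q : ℝ → Prop} :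
    (∀ y ∈ matchedCritValues T c s P, Q y) ↔
      ∀ m, PrefixMatch T c s (m + 1) → P (kneadOnes T c m) → Q (T^[m + 1] c) := by
  refine ⟨fun h m hpm hP => h _ (iterate_mem_matchedCritValues hpm hP), ?_⟩
  rintro h _ ⟨_ | m, hm, hpm, hP, rfl⟩
  · omega
  · exact h m hpm hP

theorem matchedCritValues_subset_Icc (hT : IsUnimodal T c) (P : ℕ → Prop) :
    matchedCritValues T c s P ⊆ Icc 0 1 := by
  rintro _ ⟨n, -, -, -, rfl⟩
  exact hT.iterate_mem hT.crit_mem n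

theorem iInf_sSup_frontCoords (hT : IsUnimodal T c) (hadm : AdmissibleLeft T c s) :
    ⨅ n, sSup (frontCoords T c s n) = sInf (matchedCritValues T c s Even) := by
  have hmem := (isGreatest_iInter_iInf_sSup (antitone_frontCoords hT) (isCompact_frontCoords hT)
    (frontCoords_nonempty hT hadm)).1
  have hbdd : BddBelow (matchedCritValues T c s Even) :=
    ⟨0, fun _ hy => (matchedCritValues_subset_Icc hT Even hy).1⟩
  have hne : (matchedCritValues T c s Even).Nonempty :=
    ⟨_, iterate_mem_matchedCritValues (m := 0) (fun i hi => absurd hi (by omega))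
      (by simp [kneadOnes])⟩
  refine le_antisymm (le_csInf hne (forall_mem_matchedCritValues.mpr fun m hpm he => ?_))
    (le_ciInf fun n => ?_)
  · exact (le_iterate_crit_of_prefixMatch hT hpm (mem_iInter.mp hmem m)).1 he
  · obtain ⟨m, hpm, he, hsup⟩ := exists_even_match_eq_sSup hT hadm n
    exact hsup ▸ csInf_le hbdd (iterate_mem_matchedCritValues hpm he)

/-- When no odd match exists, `sSup ∅ = 0` is the right value: then `0 ∈ π₀(A(s))`. -/
theorem iSup_sInf_frontCoords (hT : IsUnimodal T c) (hadm : AdmissibleLeft T c s) :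
    ⨆ n, sInf (frontCoords T c s n) = sSup (matchedCritValues T c s Odd) := by
  have hmem := (isLeast_iInter_iSup_sInf (antitone_frontCoords hT) (isCompact_frontCoords hT)
    (frontCoords_nonempty hT hadm)).1
  have hbdd : BddAbove (matchedCritValues T c s Odd) :=
    ⟨1, fun _ hy => (matchedCritValues_subset_Icc hT Odd hy).2⟩
  refine le_antisymm (ciSup_le fun n => ?_) ?_
  · rcases exists_odd_match_eq_sInf hT hadm n with ⟨m, hpm, ho, hinf⟩ | h0
    · exact hinf ▸ le_csSup hbdd (iterate_mem_matchedCritValues hpm ho)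
    · exact h0 ▸ Real.sSup_nonneg fun _ hy => (matchedCritValues_subset_Icc hT Odd hy).1
  · rcases eq_empty_or_nonempty (matchedCritValues T c s Odd) with hempty | hne
    · rw [hempty, Real.sSup_empty]
      exact (frontCoords_subset_Icc hT 0 (mem_iInter.mp hmem 0)).1
    · refine csSup_le hne (forall_mem_matchedCritValues.mpr fun m hpm ho => ?_)
      exact (le_iterate_crit_of_prefixMatch hT hpm (mem_iInter.mp hmem m)).2 ho

end Unimodal

open Unimodal

/-- For every admissible left-infinite sequence `s ∈ {0,1}^{-ℕ}`:
`sup π₀(A(s)) = inf {Tⁿ(c) : n ≥ 1, s_{-(n-1)}…s_{-1} = c₁…c_{n-1}, #_1(c₁…c_{n-1}) even}`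
and
`inf π₀(A(s)) = sup {Tⁿ(c) : n ≥ 1, s_{-(n-1)}…s_{-1} = c₁…c_{n-1}, #_1(c₁…c_{n-1}) odd}`. -/
theorem stmt7 (T : ℝ → ℝ) (c : ℝ) (hT : IsUnimodal T c) (s : ℕ → Bool)
    (hadm : AdmissibleLeft T c s) :
    sSup (proj0 '' basicArc T c s) =
      sInf {y : ℝ | ∃ n : ℕ, 1 ≤ n ∧ PrefixMatch T c s n ∧
        Even (kneadOnes T c (n - 1)) ∧ y = T^[n] c} ∧
    sInf (proj0 '' basicArc T c s) =
      sSup {y : ℝ | ∃ n : ℕ, 1 ≤ n ∧ PrefixMatch T c s n ∧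
        Odd (kneadOnes T c (n - 1)) ∧ y = T^[n] c} := by
  rw [proj0_image_basicArc hT,
    (isGreatest_iInter_iInf_sSup (antitone_frontCoords hT) (isCompact_frontCoords hT)
      (frontCoords_nonempty hT hadm)).csSup_eq,
    (isLeast_iInter_iSup_sInf (antitone_frontCoords hT) (isCompact_frontCoords hT)
      (frontCoords_nonempty hT hadm)).csInf_eq]
  exact ⟨iInf_sSup_frontCoords hT hadm, iSup_sInf_frontCoords hT hadm⟩
end

section
/- Let s, t ∈ {0,1}^{-ℕ}. If s_{-n}…s_{-1} = t_{-n}…t_{-1}, then |ψ_L(s) − ψ_L(t)| ≤ 3^{-n}. If s_{-n} ≠ t_{-n}, then |ψ_L(s) − ψ_L(t)| ≥ 3^{-n}. -/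
-- A left-infinite sequence `s = …s_{-2}s_{-1} ∈ {0,1}^{-ℕ}` is modelled as
-- `s : ℕ → Bool`, with `s i` representing the entry `s_{-(i+1)}`.

/-- `#_1(s_{-k} … s_{-1})`: the number of `1`s among the first `k` entries
(counted from the right) of the left-infinite sequence `s`. -/
def numOnes (s : ℕ → Bool) (k : ℕ) : ℕ :=
  ((Finset.range k).filter fun i => s i = true).card

/-- The ordering `≺_L` on `{0,1}^{-ℕ}` determined by `L`: if `k` (a 0-based index,
so `k+1` is the paper's `k`) is minimal with `s_{-(k+1)} ≠ t_{-(k+1)}`, then `s ≺_L t`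
iff either `t_{-(k+1)} = l_{-(k+1)}` and `#_1(s_{-k}…s_{-1}) - #_1(l_{-k}…l_{-1})` is
even, or `s_{-(k+1)} = l_{-(k+1)}` and that difference is odd. (A difference of
naturals is even/odd exactly when their sum is, which is how parity is phrased here.) -/
def LOrd (L : ℕ → Bool) (s t : ℕ → Bool) : Prop :=
  ∃ k : ℕ, (∀ i < k, s i = t i) ∧ s k ≠ t k ∧
    ((t k = L k ∧ Even (numOnes s k + numOnes L k)) ∨
     (s k = L k ∧ Odd (numOnes s k + numOnes L k)))

/-- The map `ψ_L : {0,1}^{-ℕ} → ℝ`,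
`ψ_L(s) = 1/2 + Σ_{i=1}^∞ (-1)^{#_1(l_{-i}…l_{-1}) - #_1(s_{-i}…s_{-1})} · 3^{-i}`. -/
noncomputable def psiL (L : ℕ → Bool) (s : ℕ → Bool) : ℝ :=
  1 / 2 + ∑' i : ℕ,
    (-1 : ℝ) ^ ((numOnes L (i + 1) : ℤ) - (numOnes s (i + 1) : ℤ)) * (3 : ℝ) ^ (-(i + 1 : ℤ))

namespace Aux

noncomputable def e (L s : ℕ → Bool) (i : ℕ) : ℝ :=
  (-1 : ℝ) ^ ((numOnes L (i + 1) : ℤ) - (numOnes s (i + 1) : ℤ))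

noncomputable def f (L s : ℕ → Bool) (i : ℕ) : ℝ := e L s i * (3 : ℝ) ^ (-(i + 1 : ℤ))

lemma pow_eq' (i : ℕ) : (3:ℝ) ^ (-(i:ℤ)) = (3⁻¹:ℝ)^i := by
  rw [inv_pow, ← zpow_natCast (3:ℝ), ← zpow_neg]

lemma pow_eq (i : ℕ) : (3:ℝ) ^ (-(i+1:ℤ)) = (3⁻¹:ℝ)^(i+1) := by
  rw [inv_pow, ← zpow_natCast (3:ℝ), ← zpow_neg]
  norm_num

lemma abs_e (L s : ℕ → Bool) (i : ℕ) : |e L s i| = 1 := by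
  rw [e]
  rcases Int.even_or_odd ((numOnes L (i + 1) : ℤ) - (numOnes s (i + 1) : ℤ)) with h | h
  · rw [h.neg_one_zpow]; simp
  · rw [h.neg_one_zpow]; simp

lemma abs_f (L s : ℕ → Bool) (i : ℕ) : |f L s i| = (3⁻¹:ℝ)^(i+1) := by
  rw [f, abs_mul, abs_e, one_mul, pow_eq, abs_of_nonneg (by positivity)]

lemma summable_geom (c : ℕ) : Summable (fun i : ℕ => (3⁻¹:ℝ)^(i+c)) := by
  simpa [pow_add] using (summable_geometric_of_lt_one (by norm_num) (by norm_num : (3⁻¹:ℝ) < 1)).mul_right ((3⁻¹:ℝ)^c)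

lemma tsum_geom (c : ℕ) : ∑' i : ℕ, (3⁻¹:ℝ)^(i+c) = (3/2) * (3⁻¹:ℝ)^c := by
  rw [show (fun i : ℕ => (3⁻¹:ℝ)^(i+c)) = fun i => (3⁻¹:ℝ)^i * (3⁻¹:ℝ)^c from funext fun i => pow_add _ _ _]
  rw [tsum_mul_right, tsum_geometric_of_lt_one (by norm_num) (by norm_num)]
  norm_num

lemma summable_f (L s : ℕ → Bool) : Summable (f L s) := by
  refine Summable.of_abs ?_
  simpa [abs_f] using summable_geom 1

end Aux

namespace Aux

lemma numOnes_congr {s t : ℕ → Bool} (m : ℕ) (h : ∀ i < m, s i = t i) :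
    numOnes s m = numOnes t m := by
  unfold numOnes
  congr 1
  exact Finset.filter_congr (by intro x hx; simp [h x (Finset.mem_range.mp hx)])

lemma numOnes_succ (s : ℕ → Bool) (k : ℕ) :
    numOnes s (k + 1) = numOnes s k + if s k = true then 1 else 0 := by
  unfold numOnes
  rw [Finset.range_add_one, Finset.filter_insert]
  split <;> simp [Finset.card_insert_of_notMem, Finset.mem_filter]

lemma zflip (z : ℤ) : (-1:ℝ)^(z-1) = -(-1:ℝ)^z := by
  rw [zpow_sub₀ (by norm_num : (-1:ℝ) ≠ 0), zpow_one]; ring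

lemma e_flip (L s t : ℕ → Bool) (k : ℕ) (hlt : ∀ i < k, s i = t i) (hne : s k ≠ t k) :
    e L t k = - e L s k := by
  have hk : numOnes s k = numOnes t k := numOnes_congr k hlt
  have hs := numOnes_succ s k
  have ht := numOnes_succ t k
  have h2 : (numOnes t (k+1) : ℤ) = numOnes s (k+1) + 1 ∨
      (numOnes s (k+1):ℤ) = numOnes t (k+1) + 1 := by
    cases hsk : s k <;> cases htk : t k <;> simp [hsk, htk] at hne hs ht <;> omega
  rw [e, e]
  rcases h2 with h | h
  · rw [h, show (numOnes L (k+1):ℤ) - ((numOnes s (k+1):ℤ)+1)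
        = ((numOnes L (k+1):ℤ) - numOnes s (k+1)) - 1 by ring, zflip]
  · rw [h, show (numOnes L (k+1):ℤ) - ((numOnes t (k+1):ℤ)+1)
        = ((numOnes L (k+1):ℤ) - numOnes t (k+1)) - 1 by ring, zflip, neg_neg]

lemma tail_bound (g : ℕ → ℝ) (hsum : Summable g)
    (habs : ∀ i, |g i| ≤ 2 * (3⁻¹:ℝ)^(i+1)) (m : ℕ) :
    |∑' i : ℕ, g (i + m)| ≤ (3⁻¹:ℝ)^m := by
  have hb : Summable (fun i : ℕ => 2 * (3⁻¹:ℝ)^(i+(m+1))) := (summable_geom (m+1)).mul_left 2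
  have h1 : Summable (fun i : ℕ => |g (i + m)|) := by
    apply Summable.of_nonneg_of_le (fun i => abs_nonneg _) (fun i => ?_) hb
    simpa [add_assoc, add_comm, add_left_comm] using habs (i + m)
  calc |∑' i : ℕ, g (i + m)| ≤ ∑' i : ℕ, |g (i + m)| := by
        simpa [Real.norm_eq_abs] using norm_tsum_le_tsum_norm (f := fun i => g (i + m)) (by simpa using h1)
    _ ≤ ∑' i : ℕ, 2 * (3⁻¹:ℝ)^(i+(m+1)) := by
        apply Summable.tsum_le_tsum (fun i => ?_) h1 hb
        simpa [add_assoc, add_comm, add_left_comm] using habs (i + m)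
    _ = (3⁻¹:ℝ)^m := by
        rw [tsum_mul_left, tsum_geom]
        rw [pow_succ]
        ring

lemma key (L s t : ℕ → Bool) :
    psiL L s - psiL L t = ∑' i : ℕ, (f L s i - f L t i) := by
  rw [psiL, psiL, Summable.tsum_sub (summable_f L s) (summable_f L t)]
  simp [f, e]

end Aux


/-- If `s_{-n}…s_{-1} = t_{-n}…t_{-1}` then `|ψ_L(s) - ψ_L(t)| ≤ 3^{-n}`;
if `s_{-n} ≠ t_{-n}` then `|ψ_L(s) - ψ_L(t)| ≥ 3^{-n}`. -/
theorem stmt10 (L s t : ℕ → Bool) (n : ℕ) (hn : 1 ≤ n) :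
    ((∀ i < n, s i = t i) → |psiL L s - psiL L t| ≤ (3 : ℝ) ^ (-(n : ℤ))) ∧
    (s (n - 1) ≠ t (n - 1) → (3 : ℝ) ^ (-(n : ℤ)) ≤ |psiL L s - psiL L t|) := by
  set g : ℕ → ℝ := fun i => Aux.f L s i - Aux.f L t i with hg
  have hsum : Summable g := (Aux.summable_f L s).sub (Aux.summable_f L t)
  have hkey : psiL L s - psiL L t = ∑' i : ℕ, g i := Aux.key L s t
  have habs : ∀ i, |g i| ≤ 2 * (3⁻¹:ℝ)^(i+1) := by
    intro i
    calc |g i| ≤ |Aux.f L s i| + |Aux.f L t i| := abs_sub _ _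
      _ = 2 * (3⁻¹:ℝ)^(i+1) := by rw [Aux.abs_f, Aux.abs_f]; ring
  have hzero : ∀ i, (∀ j < i + 1, s j = t j) → g i = 0 := by
    intro i hag
    have h1 : numOnes s (i+1) = numOnes t (i+1) := Aux.numOnes_congr _ hag
    simp [hg, Aux.f, Aux.e, h1]
  constructor
  · intro hag
    have hdecomp := Summable.sum_add_tsum_nat_add (f := g) n hsum
    have hz : ∑ i ∈ Finset.range n, g i = 0 :=
      Finset.sum_eq_zero fun i hi =>
        hzero i fun j hj => hag j (by have := Finset.mem_range.mp hi; omega)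
    rw [hkey, ← hdecomp, hz, zero_add, Aux.pow_eq']
    exact Aux.tail_bound g hsum habs n
  · intro hne'
    have hex : ∃ k, s k ≠ t k := ⟨n - 1, hne'⟩
    set k := Nat.find hex with hkdef
    have hk : s k ≠ t k := Nat.find_spec hex
    have hmin : ∀ i < k, s i = t i := fun i hi => not_ne_iff.mp (Nat.find_min hex hi)
    have hkn : k + 1 ≤ n := by
      have := Nat.find_min' hex hne'
      omega
    have hgk : |g k| = 2 * (3⁻¹:ℝ)^(k+1) := by
      have h2 : g k = 2 * Aux.e L s k * (3:ℝ)^(-(k+1:ℤ)) := by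
        show Aux.f L s k - Aux.f L t k = _
        rw [Aux.f, Aux.f, Aux.e_flip L s t k hmin hk]; ring
      rw [h2, abs_mul, abs_mul, Aux.abs_e, Aux.pow_eq,
        abs_of_nonneg (by positivity : (0:ℝ) ≤ (3⁻¹:ℝ)^(k+1))]
      norm_num
    have hdecomp := Summable.sum_add_tsum_nat_add (f := g) (k+1) hsum
    have hz : ∑ i ∈ Finset.range (k+1), g i = g k := by
      rw [Finset.sum_range_succ, Finset.sum_eq_zero, zero_add]
      intro i hi
      exact hzero i fun j hj => hmin j (by have := Finset.mem_range.mp hi; omega)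
    have htail := Aux.tail_bound g hsum habs (k+1)
    have hlow : (3⁻¹:ℝ)^(k+1) ≤ |∑' i : ℕ, g i| := by
      rw [← hdecomp, hz]
      have h3 : |g k| ≤ |g k + ∑' i : ℕ, g (i + (k+1))| + |∑' i : ℕ, g (i + (k+1))| := by
        simpa [abs_neg, add_neg_cancel_right] using
          abs_add_le (g k + ∑' i : ℕ, g (i + (k+1))) (-(∑' i : ℕ, g (i + (k+1))))
      rw [hgk] at h3
      linarith
    rw [hkey, Aux.pow_eq']
    calc (3⁻¹:ℝ)^n ≤ (3⁻¹:ℝ)^(k+1) :=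
          pow_le_pow_of_le_one (by norm_num) (by norm_num) hkn
      _ ≤ _ := hlow
end

section
/- The map ψ_L takes values in the middle-thirds Cantor set C, it is strictly increasing with respect to ≺_L (if s ≺_L t then ψ_L(s) < ψ_L(t)), and ψ_L(L) = 1 is its maximal value. -/
/-- The middle-thirds Cantor set
`C = [0,1] ∖ ⋃_{m≥1} ⋃_{k=0}^{3^{m-1}-1} ((3k+1)/3^m, (3k+2)/3^m)`
(here `m+1` plays the role of the paper's `m ≥ 1`). -/
def cantorMiddleThirds : Set ℝ :=
  Set.Icc 0 1 \
    ⋃ (m : ℕ) (k : ℕ) (_ : k < 3 ^ m),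
      Set.Ioo ((3 * k + 1 : ℝ) / 3 ^ (m + 1)) ((3 * k + 2 : ℝ) / 3 ^ (m + 1))

/- ### Auxiliary machinery -/

/-- The `i`-th ternary digit of `ψ_L(s)`. -/
noncomputable def dig (L s : ℕ → Bool) (i : ℕ) : ℕ :=
  if Even (numOnes L (i+1) + numOnes s (i+1)) then 2 else 0

lemma dig_cases (L s : ℕ → Bool) (i : ℕ) : dig L s i = 0 ∨ dig L s i = 2 := by
  unfold dig; split <;> simp

lemma sum_geo (c : ℕ) : Summable (fun i : ℕ => ((1:ℝ)/3)^(i+c)) := by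
  simp_rw [pow_add]
  exact (summable_geometric_of_lt_one (by norm_num) (by norm_num)).mul_right _

lemma tsum_geo (c : ℕ) : ∑' i : ℕ, ((1:ℝ)/3)^(i+c) = 3/2 * (1/3)^c := by
  simp_rw [pow_add]
  rw [tsum_mul_right, tsum_geometric_of_lt_one (by norm_num) (by norm_num)]
  norm_num

lemma sum_d (d : ℕ → ℕ) (hd : ∀ i, d i = 0 ∨ d i = 2) :
    Summable (fun i : ℕ => (d i : ℝ) * (1/3)^(i+1)) := by
  refine Summable.of_nonneg_of_le (fun i => by positivity) (fun i => ?_)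
    ((sum_geo 1).mul_left 2)
  have hp : (0:ℝ) < (1/3)^(i+1) := by positivity
  rcases hd i with h | h <;> rw [h] <;> push_cast <;> nlinarith

lemma sum_dig (L s : ℕ → Bool) :
    Summable (fun i : ℕ => (dig L s i : ℝ) * (1/3)^(i+1)) :=
  sum_d _ (dig_cases L s)

lemma tail_bounds (d : ℕ → ℕ) (hd : ∀ i, d i = 0 ∨ d i = 2) (m : ℕ) :
    0 ≤ ∑' i : ℕ, (d (i + (m+1)) : ℝ) * (1/3)^(i + (m+1) + 1) ∧
    ∑' i : ℕ, (d (i + (m+1)) : ℝ) * (1/3)^(i + (m+1) + 1) ≤ ((1:ℝ)/3)^(m+1) := by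
  have hsum : Summable (fun i : ℕ => (d (i + (m+1)) : ℝ) * (1/3)^(i + (m+1) + 1)) := by
    have := (sum_d d hd).comp_injective (add_left_injective (m+1))
    exact this
  constructor
  · exact tsum_nonneg fun i => by positivity
  · have hb : ∀ i : ℕ, (d (i + (m+1)) : ℝ) * (1/3)^(i + (m+1) + 1) ≤ 2 * ((1:ℝ)/3)^(i+(m+2)) := by
      intro i
      have heq : i + (m+1) + 1 = i + (m+2) := by omega
      rw [heq]
      have hp : (0:ℝ) < (1/3)^(i+(m+2)) := by positivity
      rcases hd (i + (m+1)) with h | h <;> rw [h] <;> push_cast <;> nlinarith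
    calc ∑' i : ℕ, (d (i + (m+1)) : ℝ) * (1/3)^(i + (m+1) + 1)
        ≤ ∑' i : ℕ, 2 * ((1:ℝ)/3)^(i+(m+2)) :=
          Summable.tsum_le_tsum hb hsum ((sum_geo (m+2)).mul_left 2)
      _ = ((1:ℝ)/3)^(m+1) := by
          rw [tsum_mul_left, tsum_geo (m+2), pow_succ]
          ring

lemma psi_eq (L s : ℕ → Bool) :
    psiL L s = ∑' i : ℕ, (dig L s i : ℝ) * (1/3)^(i+1) := by
  have hterm : ∀ i : ℕ,
      (-1 : ℝ) ^ ((numOnes L (i + 1) : ℤ) - (numOnes s (i + 1) : ℤ)) * (3 : ℝ) ^ (-(i + 1 : ℤ))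
      = (dig L s i : ℝ) * (1/3)^(i+1) - (1/3)^(i+1) := by
    intro i
    have h3 : (3 : ℝ) ^ (-(i + 1 : ℤ)) = ((1:ℝ)/3)^(i+1) := by
      rw [zpow_neg, one_div, inv_pow]
      norm_cast
    have hpar : Even ((numOnes L (i+1) : ℤ) - (numOnes s (i+1) : ℤ)) ↔
        Even (numOnes L (i+1) + numOnes s (i+1)) := by
      rw [Int.even_sub, Nat.even_add, Int.even_coe_nat, Int.even_coe_nat]
    by_cases h : Even (numOnes L (i+1) + numOnes s (i+1))
    · rw [h3, Even.neg_one_zpow (hpar.mpr h)]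
      unfold dig; rw [if_pos h]; push_cast; ring
    · rw [h3, Odd.neg_one_zpow (Int.not_even_iff_odd.mp (fun he => h (hpar.mp he)))]
      unfold dig; rw [if_neg h]; push_cast; ring
  unfold psiL
  rw [tsum_congr hterm, Summable.tsum_sub (sum_dig L s) (sum_geo 1), tsum_geo 1]
  ring

lemma mem_cantor (d : ℕ → ℕ) (hd : ∀ i, d i = 0 ∨ d i = 2) :
    (∑' i : ℕ, (d i : ℝ) * (1/3)^(i+1)) ∈ cantorMiddleThirds := by
  set x := ∑' i : ℕ, (d i : ℝ) * (1/3)^(i+1) with hx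
  have hsum := sum_d d hd
  constructor
  · constructor
    · exact tsum_nonneg fun i => by positivity
    · calc x ≤ ∑' i : ℕ, 2 * ((1:ℝ)/3)^(i+1) := by
            refine Summable.tsum_le_tsum (fun i => ?_) hsum ((sum_geo 1).mul_left 2)
            have hp : (0:ℝ) < (1/3)^(i+1) := by positivity
            rcases hd i with h | h <;> rw [h] <;> push_cast <;> nlinarith
        _ = 1 := by rw [tsum_mul_left, tsum_geo 1]; norm_num
  · intro hmem
    simp only [Set.mem_iUnion, Set.mem_Ioo] at hmem
    obtain ⟨m, k, hk, hx1, hx2⟩ := hmem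
    set A : ℕ := ∑ i ∈ Finset.range (m+1), d i * 3^(m - i) with hA
    set T : ℝ := ∑' i : ℕ, (d (i + (m+1)) : ℝ) * (1/3)^(i + (m+1) + 1) with hT
    have hsplit : (A : ℝ) / 3^(m+1) + T = x := by
      have := Summable.sum_add_tsum_nat_add (f := fun i : ℕ => (d i : ℝ) * (1/3)^(i+1)) (m+1) hsum
      rw [hx, ← this]
      congr 1
      rw [hA]
      push_cast
      rw [Finset.sum_div]
      refine Finset.sum_congr rfl fun i hi => ?_
      simp only [Finset.mem_range] at hi
      have h1 : (3:ℝ)^(m+1) = 3^(m-i) * 3^(i+1) := by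
        rw [← pow_add]; congr 1; omega
      have h2 : ((1:ℝ)/3)^(i+1) = (3^(i+1))⁻¹ := by rw [one_div, inv_pow]
      rw [h2, h1]
      field_simp
    obtain ⟨hT0, hT1⟩ := tail_bounds d hd m
    have hp : (0:ℝ) < 3^(m+1) := by positivity
    have hinv : ((1:ℝ)/3)^(m+1) * 3^(m+1) = 1 := by
      rw [one_div, inv_pow, inv_mul_cancel₀ (by positivity)]
    rw [← hsplit] at hx1 hx2
    rw [div_lt_iff₀ hp] at hx1
    rw [lt_div_iff₀ hp] at hx2
    have he1 : ((A : ℝ) / 3^(m+1) + T) * 3^(m+1) = A + T * 3^(m+1) := by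
      field_simp
    rw [he1] at hx1 hx2
    have hTm0 : 0 ≤ T * 3^(m+1) := mul_nonneg hT0 hp.le
    have hTm1 : T * 3^(m+1) ≤ 1 := by
      calc T * 3^(m+1) ≤ ((1:ℝ)/3)^(m+1) * 3^(m+1) :=
            mul_le_mul_of_nonneg_right hT1 hp.le
        _ = 1 := hinv
    have hr1 : (3*k+1 : ℝ) < A + 1 := by linarith
    have hr2 : (A : ℝ) < 3*k+2 := by linarith
    have hn1 : 3*k+1 < A + 1 := by exact_mod_cast hr1
    have hn2 : A < 3*k+2 := by exact_mod_cast hr2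
    have hAmod : A % 3 = d m % 3 := by
      rw [hA, Finset.sum_range_succ]
      have h0 : m - m = 0 := by omega
      rw [h0, pow_zero, mul_one]
      have hdvd : 3 ∣ ∑ i ∈ Finset.range m, d i * 3^(m - i) := by
        refine Finset.dvd_sum fun i hi => ?_
        simp only [Finset.mem_range] at hi
        exact Dvd.dvd.mul_left (dvd_pow_self 3 (by omega)) _
      omega
    rcases hd m with h | h <;> omega

lemma numOnes_succ (s : ℕ → Bool) (k : ℕ) :
    numOnes s (k+1) = numOnes s k + (if s k = true then 1 else 0) := by
  unfold numOnes
  rw [Finset.range_add_one, Finset.filter_insert]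
  by_cases h : s k = true <;>
    simp [h, Finset.card_insert_of_notMem, Finset.notMem_range_self]

lemma numOnes_congr {s t : ℕ → Bool} {k : ℕ} (h : ∀ j < k, s j = t j) {n : ℕ} (hn : n ≤ k) :
    numOnes s n = numOnes t n := by
  unfold numOnes
  congr 1
  apply Finset.filter_congr
  intro j hj
  simp only [Finset.mem_range] at hj
  rw [h j (lt_of_lt_of_le hj hn)]

lemma dig_k (L s t : ℕ → Bool) (k : ℕ) (hagree : ∀ i < k, s i = t i) (hne : s k ≠ t k)
    (hcond : (t k = L k ∧ Even (numOnes s k + numOnes L k)) ∨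
             (s k = L k ∧ Odd (numOnes s k + numOnes L k))) :
    dig L s k = 0 ∧ dig L t k = 2 := by
  have hst : numOnes s k = numOnes t k := numOnes_congr hagree le_rfl
  have hs1 := numOnes_succ s k
  have ht1 := numOnes_succ t k
  have hL1 := numOnes_succ L k
  have key : (numOnes L (k+1) + numOnes s (k+1)) % 2 = 1 ∧
      (numOnes L (k+1) + numOnes t (k+1)) % 2 = 0 := by
    rcases hcond with ⟨hk, hev⟩ | ⟨hk, hod⟩ <;>
      cases hb1 : s k <;> cases hb2 : t k <;> cases hb3 : L k <;>
      simp_all [Nat.even_iff, Nat.odd_iff] <;> omega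
  constructor
  · unfold dig
    rw [if_neg]
    rw [Nat.even_iff]
    omega
  · unfold dig
    rw [if_pos]
    rw [Nat.even_iff]
    omega

lemma psi_lt (L s t : ℕ → Bool) (h : LOrd L s t) : psiL L s < psiL L t := by
  obtain ⟨k, hagree, hne, hcond⟩ := h
  obtain ⟨hds, hdt⟩ := dig_k L s t k hagree hne hcond
  have hdig_eq : ∀ i < k, dig L s i = dig L t i := by
    intro i hi
    unfold dig
    rw [numOnes_congr hagree (by omega : i+1 ≤ k)]
  rw [psi_eq L s, psi_eq L t]
  have hsplit_s := Summable.sum_add_tsum_nat_add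
    (f := fun i : ℕ => (dig L s i : ℝ) * (1/3)^(i+1)) (k+1) (sum_dig L s)
  have hsplit_t := Summable.sum_add_tsum_nat_add
    (f := fun i : ℕ => (dig L t i : ℝ) * (1/3)^(i+1)) (k+1) (sum_dig L t)
  rw [← hsplit_s, ← hsplit_t]
  obtain ⟨hTs0, hTs1⟩ := tail_bounds (dig L s) (dig_cases L s) k
  obtain ⟨hTt0, hTt1⟩ := tail_bounds (dig L t) (dig_cases L t) k
  have hfin : ∑ i ∈ Finset.range k, (dig L s i : ℝ) * (1/3)^(i+1)
      = ∑ i ∈ Finset.range k, (dig L t i : ℝ) * (1/3)^(i+1) :=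
    Finset.sum_congr rfl fun i hi => by rw [hdig_eq i (Finset.mem_range.mp hi)]
  rw [Finset.sum_range_succ, Finset.sum_range_succ, hfin, hds, hdt]
  have hp : (0:ℝ) < (1/3:ℝ)^(k+1) := by positivity
  push_cast
  linarith

/- ### Main theorem -/

/-- `ψ_L` takes values in the middle-thirds Cantor set, is strictly increasing with
respect to `≺_L`, and `ψ_L(L) = 1` is its maximal value. -/
theorem stmt11 (L : ℕ → Bool) :
    (∀ s : ℕ → Bool, psiL L s ∈ cantorMiddleThirds) ∧
    (∀ s t : ℕ → Bool, LOrd L s t → psiL L s < psiL L t) ∧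
    psiL L L = 1 ∧
    (∀ s : ℕ → Bool, psiL L s ≤ psiL L L) := by
  have hmem : ∀ s : ℕ → Bool, psiL L s ∈ cantorMiddleThirds := by
    intro s
    rw [psi_eq L s]
    exact mem_cantor _ (dig_cases L s)
  have hLL : psiL L L = 1 := by
    rw [psi_eq L L]
    have hdL : ∀ i, dig L L i = 2 := by
      intro i
      unfold dig
      rw [if_pos ⟨numOnes L (i+1), rfl⟩]
    calc ∑' i : ℕ, (dig L L i : ℝ) * (1/3)^(i+1)
        = ∑' i : ℕ, 2 * ((1:ℝ)/3)^(i+1) := by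
          refine tsum_congr fun i => ?_
          rw [hdL i]
          norm_num
      _ = 1 := by rw [tsum_mul_left, tsum_geo 1]; norm_num
  refine ⟨hmem, fun s t h => psi_lt L s t h, hLL, fun s => ?_⟩
  rw [hLL]
  exact (hmem s).1.2
end

section
/- Let (U_n)_{n∈ℕ} be pairwise disjoint subsets of ℝ² with diam(U_n) → 0 as n → ∞, and let f_n : ℝ² → ℝ² be continuous maps such that f_n is the identity on ℝ² ∖ U_n and f_n(U_n) ⊆ U_n for every n. Then the sequence F_n := f_n ∘ f_{n-1} ∘ … ∘ f_1 is uniformly Cauchy, i.e., sup_{x∈ℝ²} d(F_m(x), F_n(x)) → 0 as n, m → ∞; consequently (F_n) converges uniformly to a continuous map F : ℝ² → ℝ². -/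
/-!
Since the `U k` are pairwise disjoint, every `f m` maps every `U k` into itself (for `m ≠ k` it
is the identity on `U k`). Follow the orbit `F n x` from time `n` on: it stays put until the
first time `k ≥ n` at which it lies in `U k`, and from then on it never leaves `U k`. So
`F m x` and `F n x` are equal or lie in a common `U k` with `k ≥ n`, and their distance is at
most `sup_{k ≥ n} diam (U k)`, uniformly in `x`.
-/

open Filter Set Topology

section Orbit

variable {X : Type*} {U : ℕ → Set X} {f : ℕ → X → X}

theorem mapsTo_of_pairwise_disjoint (hdisj : Pairwise (Function.onFun Disjoint U))
    (hfid : ∀ n, ∀ x ∉ U n, f n x = x) (hfmap : ∀ n, MapsTo (f n) (U n) (U n)) (m k : ℕ) :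
    MapsTo (f m) (U k) (U k) := by
  rcases eq_or_ne m k with rfl | hmk
  · exact hfmap m
  · intro x hx
    rwa [hfid m x fun hxm => (hdisj hmk).le_bot ⟨hxm, hx⟩]

theorem orbit_eq_or_mem_of_le (hinv : ∀ m k, MapsTo (f m) (U k) (U k))
    (hfid : ∀ n, ∀ x ∉ U n, f n x = x) {y : ℕ → X} (hy : ∀ n, y (n + 1) = f n (y n))
    {n m : ℕ} (hnm : n ≤ m) : y m = y n ∨ ∃ k ≥ n, y n ∈ U k ∧ y m ∈ U k := by
  induction m, hnm using Nat.le_induction with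
  | base => exact Or.inl rfl
  | succ m hnm ih =>
    rw [hy]
    rcases ih with hfixed | ⟨k, hk, hnk, hmk⟩
    · by_cases hmU : y m ∈ U m
      · exact Or.inr ⟨m, hnm, hfixed ▸ hmU, hinv m m hmU⟩
      · exact Or.inl (by rw [hfid m _ hmU, hfixed])
    · exact Or.inr ⟨k, hk, hnk, hinv m k hmk⟩

theorem edist_orbit_le [PseudoEMetricSpace X] (hinv : ∀ m k, MapsTo (f m) (U k) (U k))
    (hfid : ∀ n, ∀ x ∉ U n, f n x = x) {y : ℕ → X} (hy : ∀ n, y (n + 1) = f n (y n))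
    {n m : ℕ} (hnm : n ≤ m) {δ : ENNReal} (hδ : ∀ k ≥ n, Metric.ediam (U k) ≤ δ) :
    edist (y m) (y n) ≤ δ := by
  rcases orbit_eq_or_mem_of_le hinv hfid hy hnm with hfixed | ⟨k, hk, hnk, hmk⟩
  · simp [hfixed]
  · exact (Metric.edist_le_ediam_of_mem hmk hnk).trans (hδ k hk)

theorem exists_forall_dist_le_of_pairwise_disjoint [PseudoMetricSpace X] {α : Type*}
    (hdisj : Pairwise (Function.onFun Disjoint U))
    (hdiam : Tendsto (fun n => Metric.ediam (U n)) atTop (𝓝 0))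
    (hfid : ∀ n, ∀ x ∉ U n, f n x = x) (hfmap : ∀ n, MapsTo (f n) (U n) (U n))
    {F : ℕ → α → X} (hFs : ∀ n, F (n + 1) = f n ∘ F n) {ε : ℝ} (hε : 0 < ε) :
    ∃ N, ∀ m ≥ N, ∀ n ≥ N, ∀ x, dist (F m x) (F n x) ≤ ε := by
  obtain ⟨N, hN⟩ := eventually_atTop.mp
    (hdiam.eventually (gt_mem_nhds (ENNReal.ofReal_pos.mpr hε)))
  have hinv := mapsTo_of_pairwise_disjoint hdisj hfid hfmap
  have hle : ∀ n ≥ N, ∀ m ≥ n, ∀ x, dist (F m x) (F n x) ≤ ε := fun n hn m hnm x => by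
    rw [← edist_le_ofReal hε.le]
    exact edist_orbit_le (y := (F · x)) hinv hfid (fun k => congrFun (hFs k) x) hnm
      fun k hk => (hN k (hn.trans hk)).le
  refine ⟨N, fun m hm n hn x => ?_⟩
  rcases le_total n m with hnm | hmn
  · exact hle n hn m hnm x
  · exact dist_comm (F m x) (F n x) ▸ hle m hm n hmn x

end Orbit

theorem Metric.uniformCauchySeqOn_univ_of_forall_dist_le {α X : Type*} [PseudoMetricSpace X]
    {F : ℕ → α → X} (h : ∀ ε > 0, ∃ N, ∀ m ≥ N, ∀ n ≥ N, ∀ x, dist (F m x) (F n x) ≤ ε) :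
    UniformCauchySeqOn F atTop univ := by
  refine Metric.uniformCauchySeqOn_iff.mpr fun ε hε => ?_
  obtain ⟨N, hN⟩ := h (ε / 2) (half_pos hε)
  exact ⟨N, fun m hm n hn x _ => (hN m hm n hn x).trans_lt (half_lt_self hε)⟩

theorem UniformCauchySeqOn.exists_tendstoUniformly {ι α β : Type*} [Nonempty ι]
    [SemilatticeSup ι] [UniformSpace β] [CompleteSpace β] {F : ι → α → β}
    (hF : UniformCauchySeqOn F atTop univ) : ∃ G, TendstoUniformly F G atTop := by
  choose G hG using fun x => cauchySeq_tendsto_of_complete (hF.cauchySeq (mem_univ x))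
  exact ⟨G, tendstoUniformlyOn_univ.mp (hF.tendstoUniformlyOn_of_tendsto fun x _ => hG x)⟩

/-- Let `(U n)` be pairwise disjoint subsets of the plane with `diam (U n) → 0`, and let
`f n : ℝ² → ℝ²` be continuous maps which are the identity outside `U n` and map `U n`
into itself. Then the compositions `F n = f (n-1) ∘ … ∘ f 0` form a uniformly Cauchy
sequence, and hence converge uniformly to a continuous map `G : ℝ² → ℝ²`. -/
theorem stmt16 (U : ℕ → Set (ℝ × ℝ)) (hdisj : Pairwise (Function.onFun Disjoint U))
    (hdiam : Filter.Tendsto (fun n => EMetric.diam (U n)) Filter.atTop (nhds 0))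
    (f : ℕ → ℝ × ℝ → ℝ × ℝ) (hfc : ∀ n, Continuous (f n))
    (hfid : ∀ n, ∀ x ∉ U n, f n x = x)
    (hfmap : ∀ n, Set.MapsTo (f n) (U n) (U n))
    (F : ℕ → ℝ × ℝ → ℝ × ℝ) (hF0 : F 0 = id) (hFs : ∀ n, F (n + 1) = f n ∘ F n) :
    (∀ ε : ℝ, 0 < ε → ∃ N : ℕ, ∀ m ≥ N, ∀ n ≥ N, ∀ x : ℝ × ℝ, dist (F m x) (F n x) ≤ ε) ∧
    ∃ G : ℝ × ℝ → ℝ × ℝ, Continuous G ∧ TendstoUniformly F G Filter.atTop := by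
  have hcauchy := fun ε (hε : 0 < ε) =>
    exists_forall_dist_le_of_pairwise_disjoint hdisj hdiam hfid hfmap hFs hε
  obtain ⟨G, hG⟩ :=
    (Metric.uniformCauchySeqOn_univ_of_forall_dist_le hcauchy).exists_tendstoUniformly
  have hFc : ∀ n, Continuous (F n) := by
    intro n
    induction n with
    | zero => exact hF0 ▸ continuous_id
    | succ n ih => exact hFs n ▸ (hfc n).comp ih
  exact ⟨hcauchy, G, hG.continuous (Eventually.of_forall hFc).frequently, hG⟩
end
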